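/- arXiv:2007.15743 — 7 statements merged into one kernel-verified Lean document; each statement's English description precedes it below -/
import Mathlib

section
/- Every finite simple graph on n vertices has at most 3^{n/3} maximal cliques. -/
def IsMaximalClique {V : Type*} (G : SimpleGraph V) (s : Finset V) : Prop :=
  G.IsClique (s : Set V) ∧ ∀ t : Finset V, G.IsClique (t : Set V) → s ⊆ t → s = t

lemma cube_le (t : ℕ) : t^3 ≤ 3^t := by
  induction t with
  | zero => norm_num
  | succ n ih =>
    rcases Nat.lt_or_ge n 3 with h | h
    · interval_cases n <;> norm_num
    · calc (n+1)^3 ≤ 3 * n^3 := by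
            nlinarith [Nat.mul_le_mul_right (n^2) h, Nat.mul_le_mul_right n h]
        _ ≤ 3 * 3^n := by omega
        _ = 3^(n+1) := by ring

lemma nat_le_rpow (t : ℕ) : (t:ℝ) ≤ (3:ℝ) ^ ((t:ℝ)/3) := by
  have h1 : ((t:ℝ))^(3:ℕ) ≤ (3:ℝ)^(t:ℕ) := by exact_mod_cast cube_le t
  have h2 : ((t:ℝ)^(3:ℕ)) ^ ((1:ℝ)/3) ≤ ((3:ℝ)^(t:ℕ)) ^ ((1:ℝ)/3) :=
    Real.rpow_le_rpow (by positivity) h1 (by norm_num)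
  calc (t:ℝ) = ((t:ℝ)^(3:ℕ)) ^ ((1:ℝ)/3) := by
        rw [← Real.rpow_natCast (t:ℝ) 3, ← Real.rpow_mul (by positivity)]
        norm_num
    _ ≤ ((3:ℝ)^(t:ℕ)) ^ ((1:ℝ)/3) := h2
    _ = (3:ℝ) ^ ((t:ℝ)/3) := by
        rw [← Real.rpow_natCast (3:ℝ) t, ← Real.rpow_mul (by norm_num)]
        ring_nf

lemma rpow_mono3 {a b : ℝ} (h : a ≤ b) : (3:ℝ)^(a/3) ≤ (3:ℝ)^(b/3) :=
  Real.rpow_le_rpow_of_exponent_le (by norm_num) (by linarith)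

lemma containing_le {W : Type*} [Fintype W] (G : SimpleGraph W) (u : W) :
    {s : Finset W | IsMaximalClique G s ∧ u ∈ s}.ncard ≤
      {t : Finset ↥(G.neighborSet u) |
        IsMaximalClique (G.induce (G.neighborSet u)) t}.ncard := by
  classical
  set N := G.neighborSet u with hN
  apply Set.ncard_le_ncard_of_injOn (fun C => C.subtype (· ∈ N))
  · rintro C ⟨⟨hclique, hmax⟩, huC⟩
    have ha : ∀ w ∈ C, w ≠ u → G.Adj u w := by
      intro w hw hne
      exact hclique (Finset.mem_coe.mpr huC) (Finset.mem_coe.mpr hw) (Ne.symm hne)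
    constructor
    · intro a haC b hbC hab
      simp only [Finset.mem_coe, Finset.mem_subtype] at haC hbC
      have : G.Adj a.1 b.1 := hclique haC hbC (fun h => hab (Subtype.ext h))
      simpa [SimpleGraph.comap_adj] using this
    · intro t ht hsub
      set D : Finset W := insert u (t.map (Function.Embedding.subtype (· ∈ N))) with hD
      have hDclique : G.IsClique (D : Set W) := by
        intro x hx y hy hxy
        simp only [hD, Finset.coe_insert, Set.mem_insert_iff, Finset.mem_coe,
          Finset.mem_map, Function.Embedding.coe_subtype] at hx hy
        rcases hx with hx | ⟨a, hat, rfl⟩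
        · rcases hy with hy | ⟨b, hbt, rfl⟩
          · exact absurd (hx.trans hy.symm) hxy
          · rw [hx]; exact b.2
        · rcases hy with hy | ⟨b, hbt, rfl⟩
          · have h2 : G.Adj u a.1 := a.2
            rw [hy]; exact h2.symm
          · have hab : a ≠ b := fun h => hxy (by rw [h])
            have := ht hat hbt hab
            simpa [SimpleGraph.comap_adj] using this
      have hCD : C ⊆ D := by
        intro w hw
        by_cases hwu : w = u
        · simp [hD, hwu]
        · have hadj : G.Adj u w := ha w hw hwu
          have : (⟨w, hadj⟩ : ↥N) ∈ C.subtype (· ∈ N) := by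
            simp [Finset.mem_subtype, hw]
          have htw : (⟨w, hadj⟩ : ↥N) ∈ t := hsub this
          simp only [hD, Finset.mem_insert, Finset.mem_map, Function.Embedding.coe_subtype]
          exact Or.inr ⟨⟨w, hadj⟩, htw, rfl⟩
      have hCeq : C = D := hmax D hDclique hCD
      apply Finset.Subset.antisymm hsub
      intro x hx
      have : x.1 ∈ D := by
        simp only [hD, Finset.mem_insert, Finset.mem_map, Function.Embedding.coe_subtype]
        exact Or.inr ⟨x, hx, rfl⟩
      rw [← hCeq] at this
      simpa [Finset.mem_subtype] using this
  · rintro C ⟨⟨hc, _⟩, huC⟩ C' ⟨⟨hc', _⟩, huC'⟩ h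
    replace h : C.subtype (· ∈ N) = C'.subtype (· ∈ N) := h
    have ha : ∀ w ∈ C, w ≠ u → G.Adj u w := fun w hw hne =>
      hc (Finset.mem_coe.mpr huC) (Finset.mem_coe.mpr hw) (Ne.symm hne)
    have ha' : ∀ w ∈ C', w ≠ u → G.Adj u w := fun w hw hne =>
      hc' (Finset.mem_coe.mpr huC') (Finset.mem_coe.mpr hw) (Ne.symm hne)
    ext w
    by_cases hwu : w = u
    · subst hwu; simp [huC, huC']
    constructor
    · intro hw
      have hadj := ha w hw hwu
      have : (⟨w, hadj⟩ : ↥N) ∈ C.subtype (· ∈ N) := by simp [Finset.mem_subtype, hw]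
      rw [h] at this
      simpa [Finset.mem_subtype] using this
    · intro hw
      have hadj := ha' w hw hwu
      have : (⟨w, hadj⟩ : ↥N) ∈ C'.subtype (· ∈ N) := by simp [Finset.mem_subtype, hw]
      rw [← h] at this
      simpa [Finset.mem_subtype] using this

lemma key (n : ℕ) {W : Type*} [Fintype W] (G : SimpleGraph W)
    (hcard : Fintype.card W = n) :
    ({s : Finset W | IsMaximalClique G s}.ncard : ℝ) ≤ (3:ℝ) ^ ((n:ℝ)/3) := by
  induction n using Nat.strong_induction_on generalizing W with
  | _ n ih =>
  classical
  rcases Nat.eq_zero_or_pos n with hn0 | hn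
  · subst hn0
    have hcardW : Fintype.card (Finset W) = 1 := by
      rw [Fintype.card_finset, hcard]; norm_num
    have h1 : {s : Finset W | IsMaximalClique G s}.ncard ≤ 1 := by
      calc {s : Finset W | IsMaximalClique G s}.ncard
          ≤ (Set.univ : Set (Finset W)).ncard :=
            Set.ncard_le_ncard (Set.subset_univ _) (Set.toFinite _)
        _ = 1 := by rw [Set.ncard_univ, Nat.card_eq_fintype_card, hcardW]
    have : ((1:ℕ):ℝ) ≤ (3:ℝ) ^ (((0:ℕ):ℝ)/3) := by norm_num
    exact le_trans (by exact_mod_cast h1) this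
  · haveI hne : Nonempty W := Fintype.card_pos_iff.mp (hcard ▸ hn)
    haveI instN : ∀ w : W, Fintype ↥(G.neighborSet w) := fun w => Fintype.ofFinite _
    obtain ⟨v, -, hv⟩ := Finset.exists_max_image Finset.univ
      (fun w => Fintype.card ↥(G.neighborSet w)) ⟨Classical.arbitrary W, Finset.mem_univ _⟩
    set d := Fintype.card ↥(G.neighborSet v) with hd
    set A : Finset W := Finset.univ.filter (fun w => ¬ G.Adj v w) with hA
    set mc : Finset (Finset W) := Finset.univ.filter (fun s => IsMaximalClique G s) with hmc
    -- each neighbor set is small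
    have hdlt : ∀ w : W, Fintype.card ↥(G.neighborSet w) < n := by
      intro w
      have hss : (G.neighborSet w).toFinset ⊂ Finset.univ := by
        rw [Finset.ssubset_univ_iff]
        intro h
        have : w ∈ (G.neighborSet w).toFinset := h ▸ Finset.mem_univ w
        rw [Set.mem_toFinset, SimpleGraph.mem_neighborSet] at this
        exact G.irrefl this
      have := Finset.card_lt_card hss
      rwa [Set.toFinset_card, Finset.card_univ, hcard] at this
    -- cardinality of A
    have hcardA : d + A.card = n := by
      have h1 : Finset.univ.filter (fun w => G.Adj v w) = (G.neighborSet v).toFinset := by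
        ext w; simp [SimpleGraph.mem_neighborSet]
      have h2 := Finset.card_filter_add_card_filter_not
        (s := (Finset.univ : Finset W)) (p := fun w => G.Adj v w)
      rw [h1, Set.toFinset_card, Finset.card_univ, hcard] at h2
      exact h2
    -- cover
    have hcover : mc ⊆ A.biUnion (fun u => mc.filter (fun s => u ∈ s)) := by
      intro s hs
      have hsm : IsMaximalClique G s := by simpa [hmc] using hs
      have hex : ∃ u, ¬ G.Adj v u ∧ u ∈ s := by
        by_contra hcon
        push_neg at hcon
        have hall : ∀ w ∈ s, G.Adj v w := by
          intro w hw
          by_contra hna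
          exact hcon w hna hw
        have hvs : v ∉ s := fun hv' => G.irrefl (hall v hv')
        have hclique' : G.IsClique ((insert v s : Finset W) : Set W) := by
          rw [Finset.coe_insert]
          exact hsm.1.insert (fun b hb hbv => hall b hb)
        have heq := hsm.2 (insert v s) hclique' (Finset.subset_insert v s)
        exact hvs (heq ▸ Finset.mem_insert_self v s)
      obtain ⟨u, hu1, hu2⟩ := hex
      rw [Finset.mem_biUnion]
      exact ⟨u, by simp [hA, hu1], by simp [hs, hu2]⟩
    -- per-vertex bound
    have hper : ∀ u : W, ((mc.filter (fun s => u ∈ s)).card : ℝ) ≤ (3:ℝ) ^ ((d:ℝ)/3) := by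
      intro u
      have e1 : (mc.filter (fun s => u ∈ s)).card
          = {s : Finset W | IsMaximalClique G s ∧ u ∈ s}.ncard := by
        rw [hmc, Finset.filter_filter, ← Set.ncard_coe_finset]
        congr 1
        ext s; simp
      have e3 := ih (Fintype.card ↥(G.neighborSet u)) (hdlt u)
        (G.induce (G.neighborSet u)) rfl
      have e4 : (3:ℝ) ^ ((Fintype.card ↥(G.neighborSet u) : ℝ)/3) ≤ (3:ℝ) ^ ((d:ℝ)/3) :=
        rpow_mono3 (by exact_mod_cast hv u (Finset.mem_univ u))
      calc ((mc.filter (fun s => u ∈ s)).card : ℝ)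
          = ({s : Finset W | IsMaximalClique G s ∧ u ∈ s}.ncard : ℝ) := by rw [e1]
        _ ≤ ({t : Finset ↥(G.neighborSet u) |
              IsMaximalClique (G.induce (G.neighborSet u)) t}.ncard : ℝ) := by
            exact_mod_cast containing_le G u
        _ ≤ (3:ℝ) ^ ((Fintype.card ↥(G.neighborSet u) : ℝ)/3) := e3
        _ ≤ (3:ℝ) ^ ((d:ℝ)/3) := e4
    -- put together
    have hgoal : ({s : Finset W | IsMaximalClique G s}.ncard : ℝ) = (mc.card : ℝ) := by
      rw [hmc, ← Set.ncard_coe_finset]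
      congr 2
      ext s; simp
    rw [hgoal]
    calc (mc.card : ℝ)
        ≤ ((A.biUnion (fun u => mc.filter (fun s => u ∈ s))).card : ℝ) := by
          exact_mod_cast Finset.card_le_card hcover
      _ ≤ ((∑ u ∈ A, (mc.filter (fun s => u ∈ s)).card : ℕ) : ℝ) := by
          exact_mod_cast Finset.card_biUnion_le
      _ = ∑ u ∈ A, ((mc.filter (fun s => u ∈ s)).card : ℝ) := by push_cast; rfl
      _ ≤ ∑ u ∈ A, (3:ℝ) ^ ((d:ℝ)/3) := Finset.sum_le_sum (fun u _ => hper u)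
      _ = (A.card : ℝ) * (3:ℝ) ^ ((d:ℝ)/3) := by
          rw [Finset.sum_const, nsmul_eq_mul]
      _ ≤ (3:ℝ) ^ ((A.card : ℝ)/3) * (3:ℝ) ^ ((d:ℝ)/3) := by
          exact mul_le_mul_of_nonneg_right (nat_le_rpow A.card) (by positivity)
      _ = (3:ℝ) ^ (((A.card : ℝ) + (d:ℝ))/3) := by
          rw [← Real.rpow_add (by norm_num)]; ring_nf
      _ = (3:ℝ) ^ ((n:ℝ)/3) := by
          congr 1
          have : (A.card : ℝ) + (d : ℝ) = (n : ℝ) := by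
            exact_mod_cast (by omega : A.card + d = n)
          rw [this]

/-- Every finite simple graph on `n` vertices has at most `3^(n/3)` maximal cliques. -/
theorem moon_moser_bound {V : Type*} [Fintype V] (G : SimpleGraph V) :
    ({s : Finset V | IsMaximalClique G s}.ncard : ℝ) ≤
      (3 : ℝ) ^ ((Fintype.card V : ℝ) / 3) :=
  key (Fintype.card V) G rfl
end

section
/- For every positive integer k, the complete k-partite graph whose k parts each have exactly 3 vertices (the Moon–Moser graph on n = 3k vertices) has exactly 3^k = 3^{n/3} maximal cliques, namely the sets consisting of one vertex chosen from each part. -/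
/-- The Moon–Moser graph on `n = 3k` vertices (the complete `k`-partite graph whose
parts each have exactly 3 vertices, vertices adjacent iff in different parts) has
exactly `3^k` maximal cliques, namely the sets with one vertex from each part. -/
theorem moon_moser_graph (k : ℕ) (hk : 0 < k)
    (G : SimpleGraph (Fin k × Fin 3))
    (hG : ∀ a b : Fin k × Fin 3, G.Adj a b ↔ a.1 ≠ b.1) :
    {s : Finset (Fin k × Fin 3) | IsMaximalClique G s} =
      {s : Finset (Fin k × Fin 3) | ∃ f : Fin k → Fin 3,
        s = Finset.univ.image (fun i => (i, f i))} ∧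
    {s : Finset (Fin k × Fin 3) | IsMaximalClique G s}.ncard = 3 ^ k := by
  have key : {s : Finset (Fin k × Fin 3) | IsMaximalClique G s} =
      {s : Finset (Fin k × Fin 3) | ∃ f : Fin k → Fin 3,
        s = Finset.univ.image (fun i => (i, f i))} := by
    ext s
    simp only [Set.mem_setOf_eq]
    constructor
    · rintro ⟨hc, hmax⟩
      have hex : ∀ i : Fin k, ∃ x : Fin 3, (i, x) ∈ s := by
        intro i
        by_contra h
        push_neg at h
        have hins : (i, (0 : Fin 3)) ∉ s := h 0
        have hclique : G.IsClique ((insert (i, (0 : Fin 3)) s : Finset _) : Set _) := by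
          rw [Finset.coe_insert]
          apply hc.insert
          intro b hb hne
          rw [hG]
          intro heq
          exact h b.2 (by rwa [show (i, b.2) = b by ext <;> simp [← heq]])
        have heq := hmax _ hclique (Finset.subset_insert _ _)
        rw [heq] at hins
        exact hins (Finset.mem_insert_self _ _)
      choose f hf using hex
      refine ⟨f, ?_⟩
      ext ⟨i, x⟩
      simp only [Finset.mem_image, Finset.mem_univ, true_and]
      constructor
      · intro hm
        refine ⟨i, ?_⟩
        have hx : x = f i := by
          by_contra hne
          have := hc hm (hf i) (by simp [Prod.ext_iff, hne])
          rw [hG] at this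
          exact this rfl
        rw [hx]
      · rintro ⟨j, hj⟩
        rw [← hj]
        exact hf j
    · rintro ⟨f, rfl⟩
      constructor
      · intro a ha b hb hne
        simp only [Finset.coe_image, Finset.coe_univ, Set.image_univ, Set.mem_range] at ha hb
        obtain ⟨i, rfl⟩ := ha
        obtain ⟨j, rfl⟩ := hb
        rw [hG]
        intro hij
        exact hne (by simp_all)
      · intro t ht hst
        refine Finset.Subset.antisymm hst ?_
        intro v hv
        have hv1 : (v.1, f v.1) ∈ t := hst (by simp)
        by_cases hvv : v = (v.1, f v.1)
        · rw [hvv]; simp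
        · have := ht hv hv1 hvv
          rw [hG] at this
          exact absurd rfl this
  refine ⟨key, ?_⟩
  rw [key]
  have : {s : Finset (Fin k × Fin 3) | ∃ f : Fin k → Fin 3,
        s = Finset.univ.image (fun i => (i, f i))} =
      Set.range (fun f : Fin k → Fin 3 => Finset.univ.image (fun i => (i, f i))) := by
    ext s
    simp [eq_comm]
  rw [this, ← Set.image_univ, Set.ncard_image_of_injective _ ?_, Set.ncard_univ]
  · simp [Nat.card_eq_fintype_card]
  · intro f g hfg
    funext i
    have hfg' : Finset.univ.image (fun i => (i, f i)) = Finset.univ.image (fun i => (i, g i)) := hfg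
    have : (i, f i) ∈ Finset.univ.image (fun j => (j, g j)) := by
      rw [← hfg']; simp
    simp only [Finset.mem_image, Finset.mem_univ, true_and, Prod.mk.injEq] at this
    obtain ⟨j, hj1, hj2⟩ := this
    subst hj1
    exact hj2.symm
end

section
/- Let G be a finite simple graph on n vertices and let v be a c-good vertex of G. Then the number of maximal cliques K of G such that K \ {v} is not a maximal clique of the induced subgraph G − v is at most n · 3^{(c-1)/3}. -/
/-- A vertex `v` is `c`-good if every vertex `u` distinct from and non-adjacent to `v`
has fewer than `c` common neighbors with `v`. -/
def IsCGood {V : Type*} (G : SimpleGraph V) (c : ℕ) (v : V) : Prop :=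
  ∀ u, u ≠ v → ¬ G.Adj u v → {w | G.Adj u w ∧ G.Adj v w}.ncard < c

/-- `s` is a maximal clique of the induced subgraph `G - v` (identified with the
cliques of `G` avoiding `v` that are maximal among such). -/
def IsMaximalCliqueAvoiding {V : Type*} (G : SimpleGraph V) (v : V) (s : Finset V) : Prop :=
  v ∉ s ∧ G.IsClique (s : Set V) ∧
    ∀ t : Finset V, v ∉ t → G.IsClique (t : Set V) → s ⊆ t → s = t

/-!
Moon–Moser branching: inside a vertex set `s`, pick a vertex `w` of maximum degree in `s`.
Every maximal clique `K` in `s` contains some `u ∈ s` not adjacent to `w` (possibly `u = w`, else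
`w` would extend `K`), and `K \ {u}` is a maximal clique in the neighbourhood of `u` in `s`, which
has at most `d = deg_s w` vertices. By induction there are at most
`(|s| - d) · 3^(d/3) ≤ 3^(|s|/3)` maximal cliques in `s`, using `k ≤ 3^(k/3)`.

If `K` is a maximal clique of `G` but `K \ {v}` is not maximal in `G - v`, then `v ∈ K` and some
`u ≠ v` not adjacent to `v` extends `K \ {v}`. So `K \ {v}` is a maximal clique inside the common
neighbourhood of `u` and `v`, which has fewer than `c` vertices when `v` is `c`-good. Summing the
Moon–Moser bound over the at most `n` choices of `u` gives `n · 3^((c-1)/3)`.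
-/

open Finset

lemma Nat.pow_three_le_three_pow (k : ℕ) : k ^ 3 ≤ 3 ^ k := by
  induction k with
  | zero => simp
  | succ n ih =>
    rcases Nat.lt_or_ge n 3 with hn | hn
    · interval_cases n <;> norm_num
    · have h3 : 3 * n ^ 2 ≤ n ^ 3 := by nlinarith
      calc (n + 1) ^ 3 ≤ 3 * n ^ 3 := by nlinarith
        _ ≤ 3 * 3 ^ n := Nat.mul_le_mul_left 3 ih
        _ = 3 ^ (n + 1) := by ring

lemma Nat.cast_le_three_rpow_div_three (k : ℕ) : (k : ℝ) ≤ 3 ^ ((k : ℝ) / 3) := by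
  refine le_of_pow_le_pow_left₀ three_ne_zero (by positivity) ?_
  rw [← Real.rpow_mul_natCast (by norm_num), Nat.cast_ofNat, div_mul_cancel₀ _ three_ne_zero,
    Real.rpow_natCast]
  exact_mod_cast k.pow_three_le_three_pow

lemma Finset.card_le_card_mul_of_subset_biUnion_image {ι α β : Type*} [DecidableEq α]
    {S : Finset α} {A : Finset ι} {T : ι → Finset β} {f : ι → β → α} {r : ℝ}
    (hS : S ⊆ A.biUnion fun i => (T i).image (f i)) (hT : ∀ i ∈ A, (#(T i) : ℝ) ≤ r) :
    (#S : ℝ) ≤ #A * r :=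
  calc (#S : ℝ) ≤ ∑ i ∈ A, (#((T i).image (f i)) : ℝ) := by
        exact_mod_cast (card_le_card hS).trans card_biUnion_le
    _ ≤ ∑ i ∈ A, (#(T i) : ℝ) := sum_le_sum fun i _ => by exact_mod_cast card_image_le
    _ ≤ #A * r := by simpa using sum_le_card_nsmul A _ r hT

namespace SimpleGraph

variable {V : Type*} [Fintype V] (G : SimpleGraph V)

open Classical in
noncomputable def maximalCliquesIn (s : Finset V) : Finset (Finset V) :=
  univ.filter (Maximal fun K : Finset V => K ⊆ s ∧ G.IsClique (K : Set V))

variable {G}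

lemma mem_maximalCliquesIn {s K : Finset V} :
    K ∈ G.maximalCliquesIn s ↔
      Maximal (fun K : Finset V => K ⊆ s ∧ G.IsClique (K : Set V)) K := by
  simp [maximalCliquesIn]

lemma mem_maximalCliquesIn_of_subset {s t K : Finset V} (hK : K ∈ G.maximalCliquesIn s)
    (hKt : K ⊆ t) (hts : t ⊆ s) : K ∈ G.maximalCliquesIn t := by
  rw [mem_maximalCliquesIn] at hK ⊢
  exact hK.mono (fun L hL => ⟨hL.1.trans hts, hL.2⟩) ⟨hKt, hK.prop.2⟩

lemma exists_mem_not_adj_of_mem_maximalCliquesIn [DecidableEq V] {s K : Finset V} {w : V}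
    (hK : K ∈ G.maximalCliquesIn s) (hw : w ∈ s) : ∃ u ∈ K, ¬ G.Adj w u := by
  rw [mem_maximalCliquesIn] at hK
  by_contra! hadj
  have hwK : w ∉ K := fun h => G.irrefl (hadj w h)
  have hclique : G.IsClique ((insert w K : Finset V) : Set V) := by
    rw [coe_insert]
    exact hK.prop.2.insert fun b hb _ => hadj b hb
  exact hwK <|
    hK.2 ⟨insert_subset hw hK.prop.1, hclique⟩ (subset_insert w K) (mem_insert_self w K)

lemma erase_mem_maximalCliquesIn_filter_adj [DecidableEq V] [DecidableRel G.Adj]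
    {s K : Finset V} {u : V}
    (hK : K ∈ G.maximalCliquesIn s) (hu : u ∈ K) :
    K.erase u ∈ G.maximalCliquesIn (s.filter (G.Adj u)) := by
  rw [mem_maximalCliquesIn] at hK ⊢
  obtain ⟨⟨hKs, hKclique⟩, hKmax⟩ := hK
  refine ⟨⟨fun w hw => ?_, hKclique.subset (by simp)⟩, fun t ⟨hts, htclique⟩ hsub => ?_⟩
  · obtain ⟨hwu, hwK⟩ := mem_erase.mp hw
    exact mem_filter.mpr ⟨hKs hwK, hKclique hu hwK (Ne.symm hwu)⟩
  have hut : u ∉ t := fun h => G.irrefl (mem_filter.mp (hts h)).2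
  have hclique : G.IsClique ((insert u t : Finset V) : Set V) := by
    rw [coe_insert]
    exact htclique.insert fun w hw _ => (mem_filter.mp (hts hw)).2
  have hle : insert u t ⊆ K :=
    hKmax ⟨insert_subset (hKs hu) fun w hw => (mem_filter.mp (hts hw)).1, hclique⟩
      (by rw [← insert_erase hu]; exact insert_subset_insert u hsub)
  exact fun w hw => mem_erase.mpr ⟨ne_of_mem_of_not_mem hw hut, hle (mem_insert_of_mem hw)⟩

theorem card_maximalCliquesIn_le (s : Finset V) :
    (#(G.maximalCliquesIn s) : ℝ) ≤ 3 ^ ((#s : ℝ) / 3) := by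
  classical
  induction s using Finset.strongInduction with
  | H s ih =>
  obtain rfl | hs := s.eq_empty_or_nonempty
  · have : #(G.maximalCliquesIn ∅) ≤ 1 := card_le_one.mpr fun K hK L hL => by
      rw [subset_empty.mp (mem_maximalCliquesIn.mp hK).prop.1,
        subset_empty.mp (mem_maximalCliquesIn.mp hL).prop.1]
    simpa using this
  obtain ⟨w, hws, hmax⟩ := s.exists_max_image (fun u => #(s.filter (G.Adj u))) hs
  set N := s.filter (G.Adj w)
  have hcover : G.maximalCliquesIn s ⊆ (s \ N).biUnion
      fun u => (G.maximalCliquesIn (s.filter (G.Adj u))).image (insert u) := by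
    intro K hK
    obtain ⟨u, huK, hwu⟩ := exists_mem_not_adj_of_mem_maximalCliquesIn hK hws
    have hus : u ∈ s := (mem_maximalCliquesIn.mp hK).prop.1 huK
    exact mem_biUnion.mpr ⟨u, mem_sdiff.mpr ⟨hus, fun h => hwu (mem_filter.mp h).2⟩,
      mem_image.mpr ⟨_, erase_mem_maximalCliquesIn_filter_adj hK huK, insert_erase huK⟩⟩
  have hbranch : ∀ u ∈ s \ N,
      (#(G.maximalCliquesIn (s.filter (G.Adj u))) : ℝ) ≤ 3 ^ ((#N : ℝ) / 3) := by
    intro u hu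
    have hus := (mem_sdiff.mp hu).1
    refine (ih _ (filter_ssubset.mpr ⟨u, hus, G.irrefl⟩)).trans ?_
    have hdeg : (#(s.filter (G.Adj u)) : ℝ) ≤ #N := by exact_mod_cast hmax u hus
    exact Real.rpow_le_rpow_of_exponent_le (by norm_num) (by linarith)
  calc (#(G.maximalCliquesIn s) : ℝ) ≤ #(s \ N) * 3 ^ ((#N : ℝ) / 3) :=
        card_le_card_mul_of_subset_biUnion_image hcover hbranch
    _ ≤ 3 ^ ((#(s \ N) : ℝ) / 3) * 3 ^ ((#N : ℝ) / 3) := by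
        gcongr
        exact Nat.cast_le_three_rpow_div_three _
    _ = 3 ^ ((#s : ℝ) / 3) := by
        rw [← Real.rpow_add (by norm_num), ← add_div, ← Nat.cast_add,
          card_sdiff_add_card_eq_card (filter_subset _ _)]

end SimpleGraph

lemma IsMaximalClique.mem_maximalCliquesIn_univ {V : Type*} [Fintype V] {G : SimpleGraph V}
    {K : Finset V} (hK : IsMaximalClique G K) :
    K ∈ G.maximalCliquesIn univ :=
  SimpleGraph.mem_maximalCliquesIn.mpr
    ⟨⟨subset_univ K, hK.1⟩, fun t ht hKt => (hK.2 t ht.2 hKt).ge⟩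

lemma IsMaximalClique.exists_extension_of_not_isMaximalCliqueAvoiding {V : Type*} [DecidableEq V]
    {G : SimpleGraph V} {K : Finset V} {v : V}
    (hK : IsMaximalClique G K) (h : ¬ IsMaximalCliqueAvoiding G v (K.erase v)) :
    v ∈ K ∧ ∃ u, u ≠ v ∧ ¬ G.Adj u v ∧ ∀ w ∈ K.erase v, G.Adj u w := by
  obtain ⟨hKclique, hKmax⟩ := hK
  have hvK : v ∈ K := by
    by_contra hvK
    rw [erase_eq_of_notMem hvK] at h
    exact h ⟨hvK, hKclique, fun t _ ht => hKmax t ht⟩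
  refine ⟨hvK, ?_⟩
  obtain ⟨t, hvt, htclique, hsub, hne⟩ : ∃ t : Finset V,
      v ∉ t ∧ G.IsClique (t : Set V) ∧ K.erase v ⊆ t ∧ K.erase v ≠ t := by
    by_contra! hcon
    exact h ⟨notMem_erase v K, hKclique.subset (by simp), hcon⟩
  obtain ⟨u, hut, huK⟩ := not_subset.mp fun h' => hne (hsub.antisymm h')
  have huv : u ≠ v := ne_of_mem_of_not_mem hut hvt
  have hadj : ∀ w ∈ K.erase v, G.Adj u w := fun w hw =>
    htclique hut (hsub hw) (ne_of_mem_of_not_mem hw huK).symm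
  refine ⟨u, huv, fun huv' => huK (mem_erase.mpr ⟨huv, ?_⟩), hadj⟩
  have hclique : G.IsClique ((insert u K : Finset V) : Set V) := by
    rw [coe_insert]
    refine hKclique.insert fun w hw huw => ?_
    obtain rfl | hwv := eq_or_ne w v
    · exact huv'
    · exact hadj w (mem_erase.mpr ⟨hwv, hw⟩)
  exact hKmax _ hclique (subset_insert u K) ▸ mem_insert_self u K

lemma IsMaximalClique.erase_mem_maximalCliquesIn_commonNeighbors {V : Type*} [Fintype V]
    [DecidableEq V] {G : SimpleGraph V} [DecidableRel G.Adj] {K : Finset V} {v : V}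
    (hK : IsMaximalClique G K) (h : ¬ IsMaximalCliqueAvoiding G v (K.erase v)) :
    v ∈ K ∧ ∃ u, u ≠ v ∧ ¬ G.Adj u v ∧
      K.erase v ∈ G.maximalCliquesIn (univ.filter fun w => G.Adj u w ∧ G.Adj v w) := by
  obtain ⟨hvK, u, huv, hnadj, hext⟩ := hK.exists_extension_of_not_isMaximalCliqueAvoiding h
  refine ⟨hvK, u, huv, hnadj, SimpleGraph.mem_maximalCliquesIn_of_subset
    (SimpleGraph.erase_mem_maximalCliquesIn_filter_adj hK.mem_maximalCliquesIn_univ hvK) ?_ ?_⟩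
  · exact fun w hw => mem_filter.mpr ⟨mem_univ w, hext w hw,
      hK.1 hvK (mem_erase.mp hw).2 (mem_erase.mp hw).1.symm⟩
  · exact fun w hw => mem_filter.mpr ⟨mem_univ w, (mem_filter.mp hw).2.2⟩

lemma IsCGood.card_commonNeighbors_lt {V : Type*} [Fintype V] {G : SimpleGraph V}
    [DecidableRel G.Adj] {c : ℕ} {u v : V} (hv : IsCGood G c v) (huv : u ≠ v)
    (hnadj : ¬ G.Adj u v) : #(univ.filter fun w => G.Adj u w ∧ G.Adj v w) < c := by
  simpa [← Set.ncard_coe_finset] using hv u huv hnadj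

theorem uncounted_cliques_bound_general {V : Type*} [Fintype V] [DecidableEq V] (c : ℕ)
    (G : SimpleGraph V) (v : V) (hv : IsCGood G c v) :
    ({K : Finset V | IsMaximalClique G K ∧
        ¬ IsMaximalCliqueAvoiding G v (K.erase v)}.ncard : ℝ) ≤
      (Fintype.card V : ℝ) * (3 : ℝ) ^ (((c : ℝ) - 1) / 3) := by
  classical
  set B := univ.filter fun u => u ≠ v ∧ ¬ G.Adj u v
  set C : V → Finset V := fun u => univ.filter fun w => G.Adj u w ∧ G.Adj v w
  have hcover : univ.filter (fun K => IsMaximalClique G K ∧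
      ¬ IsMaximalCliqueAvoiding G v (K.erase v)) ⊆
      B.biUnion fun u => (G.maximalCliquesIn (C u)).image (insert v) := by
    intro K hK
    obtain ⟨hKmax, hbad⟩ := (mem_filter.mp hK).2
    obtain ⟨hvK, u, huv, hnadj, hmem⟩ :=
      hKmax.erase_mem_maximalCliquesIn_commonNeighbors hbad
    exact mem_biUnion.mpr
      ⟨u, by simp [B, huv, hnadj], mem_image.mpr ⟨_, hmem, insert_erase hvK⟩⟩
  have hbranch :
      ∀ u ∈ B, (#(G.maximalCliquesIn (C u)) : ℝ) ≤ 3 ^ (((c : ℝ) - 1) / 3) := by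
    intro u hu
    obtain ⟨huv, hnadj⟩ := (mem_filter.mp hu).2
    have hC : (#(C u) : ℝ) + 1 ≤ c := by exact_mod_cast hv.card_commonNeighbors_lt huv hnadj
    exact (G.card_maximalCliquesIn_le (C u)).trans
      (Real.rpow_le_rpow_of_exponent_le (by norm_num) (by linarith))
  rw [← coe_filter_univ, Set.ncard_coe_finset]
  calc _ ≤ (#B : ℝ) * 3 ^ (((c : ℝ) - 1) / 3) :=
        card_le_card_mul_of_subset_biUnion_image hcover hbranch
    _ ≤ _ := by gcongr; exact card_le_univ B

/-- If `v` is a `c`-good vertex of a finite simple graph `G` on `n` vertices, then the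
number of maximal cliques `K` of `G` such that `K \ {v}` is not a maximal clique of
`G - v` is at most `n * 3^((c-1)/3)`. -/
theorem uncounted_cliques_bound {V : Type*} [Fintype V] [DecidableEq V] (c : ℕ) (hc : 0 < c)
    (G : SimpleGraph V) (v : V) (hv : IsCGood G c v) :
    ({K : Finset V | IsMaximalClique G K ∧
        ¬ IsMaximalCliqueAvoiding G v (K.erase v)}.ncard : ℝ) ≤
      (Fintype.card V : ℝ) * (3 : ℝ) ^ (((c : ℝ) - 1) / 3) :=
  uncounted_cliques_bound_general c G v hv
end

section
/- Let G be a c-closed finite simple graph and let S be a clique of G with exactly c vertices. Then the set of common neighbors of all vertices of S is a clique of G. -/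
/-- A graph is `c`-closed if any two distinct non-adjacent vertices have fewer than
`c` common neighbors. -/
def CClosed {V : Type*} (G : SimpleGraph V) (c : ℕ) : Prop :=
  ∀ u v, u ≠ v → ¬ G.Adj u v → {w | G.Adj u w ∧ G.Adj v w}.ncard < c

/-- In a `c`-closed finite simple graph, the set of common neighbors of a clique `S`
with exactly `c` vertices is itself a clique. -/
theorem common_neighbors_of_c_clique {V : Type*} [Fintype V] (c : ℕ) (hc : 0 < c)
    (G : SimpleGraph V) (h : CClosed G c) (S : Finset V)
    (hS : G.IsClique (S : Set V)) (hcard : S.card = c) :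
    G.IsClique {v : V | v ∉ S ∧ ∀ u ∈ S, G.Adj v u} := by
  intro x hx y hy hxy
  by_contra hadj
  have hlt := h x y hxy hadj
  have hsub : (S : Set V) ⊆ {w | G.Adj x w ∧ G.Adj y w} := by
    intro w hw
    exact ⟨hx.2 w hw, hy.2 w hw⟩
  have hge : c ≤ {w | G.Adj x w ∧ G.Adj y w}.ncard := by
    calc c = (S : Set V).ncard := by rw [Set.ncard_coe_finset, hcard]
    _ ≤ _ := Set.ncard_le_ncard hsub (Set.toFinite _)
  omega
end

section
/- There exists an absolute constant κ > 0 with the following property: for every δ ∈ (0,1] and every finite simple graph G that is δ-triangle-dense, there exists a (κ·δ^4)-tightly-knit family V_1, …, V_k in G such that the total number of triangles of G having all three vertices inside a single set V_i is at least κ·δ^4 times the total number of triangles of G. -/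
/-- The number of triangles of a finite simple graph. -/
noncomputable def triangleCount {V : Type*} [Fintype V] (G : SimpleGraph V) : ℕ :=
  {s : Finset V | G.IsNClique 3 s}.ncard

/-- The number of wedges (unordered two-edge paths) of a finite simple graph:
`Σ_v C(deg v, 2)`. -/
noncomputable def wedgeCount {V : Type*} [Fintype V] (G : SimpleGraph V) : ℕ :=
  ∑ v : V, ({u | G.Adj v u}.ncard).choose 2

/-- The triangle density `τ(G) = 3 t(G) / w(G)`, defined as `0` when `w(G) = 0`. -/
noncomputable def triangleDensity {V : Type*} [Fintype V] (G : SimpleGraph V) : ℝ :=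
  if wedgeCount G = 0 then 0 else 3 * (triangleCount G : ℝ) / (wedgeCount G : ℝ)

/-- The number of triangles of `G` with all three vertices inside `A`. -/
noncomputable def trianglesWithin {V : Type*} [Fintype V] (G : SimpleGraph V) (A : Set V) : ℕ :=
  {s : Finset V | G.IsNClique 3 s ∧ (s : Set V) ⊆ A}.ncard

/-- The number of edges of `G` with both endpoints inside `A` (edges of the induced
subgraph on `A`). -/
noncomputable def edgesWithin {V : Type*} [Fintype V] (G : SimpleGraph V) (A : Set V) : ℕ :=
  {e : Sym2 V | e ∈ G.edgeSet ∧ ∀ x ∈ e, x ∈ A}.ncard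

/-- The subgraph of `G` induced by `A` has radius at most 2: some vertex of `A` is
within distance 2 of every vertex of `A` in the induced subgraph. -/
def RadiusAtMostTwo {V : Type*} (G : SimpleGraph V) (A : Set V) : Prop :=
  ∃ v : A, ∀ u : A, ∃ w : (G.induce A).Walk v u, w.length ≤ 2

/-- A `ρ`-tightly-knit family: pairwise disjoint vertex sets, each inducing a subgraph
with at least a `ρ`-fraction of the possible edges and triangles and radius at most 2. -/
def IsTightlyKnit {V : Type*} [Fintype V] (G : SimpleGraph V) (ρ : ℝ)
    {k : ℕ} (F : Fin k → Set V) : Prop :=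
  (∀ i j, i ≠ j → Disjoint (F i) (F j)) ∧
  ∀ i, ρ * (((F i).ncard.choose 2 : ℕ) : ℝ) ≤ (edgesWithin G (F i) : ℝ) ∧
       ρ * (((F i).ncard.choose 3 : ℕ) : ℝ) ≤ (trianglesWithin G (F i) : ℝ) ∧
       RadiusAtMostTwo G (F i)

/-!
Put `θ = δ / 4` and `c = θ⁴ / 2¹³`. By induction on the graph, some `c`-tightly-knit family of sets
of non-isolated vertices captures at least `c · (t − θ w)` triangles; for a `δ`-triangle-dense graph
`t − θ w ≥ t / 4`.

If an edge `ab` has fewer than `θ (d_a + d_b − 2)` common neighbours, deleting it destroys fewer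
triangles than `θ` times the `d_a + d_b − 2` wedges it destroys, so `t − θ w` does not drop.
Otherwise let `v` have maximum degree `D`. Since every edge inside `N(v)` has many common
neighbours, the vertices `x ≠ v` close many triangles with edges inside `N(v)`. Those with fewer
than `θ² (D − 1) / 2` neighbours in `N(v)` carry little of this weight, at most `2D / θ²` others
remain, and the `2D` heaviest of these keep a `θ²`-share. With `N[v]` they form a set `A` of at
most `4D` vertices and radius at most 2 spanning `≳ θ D²` edges and `≳ θ⁴ D³` triangles, while
deleting all edges at `A` destroys at most `|A| · C(D, 2) ≤ 4 D³` triangles.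
-/
open Finset SimpleGraph

section Radius

variable {V : Type*} {G H : SimpleGraph V}

lemma RadiusAtMostTwo.mono {A : Set V} (h : G ≤ H) (hG : RadiusAtMostTwo G A) :
    RadiusAtMostTwo H A := by
  obtain ⟨v, hv⟩ := hG
  refine ⟨v, fun u => ?_⟩
  obtain ⟨w, hw⟩ := hv u
  exact ⟨w.map (Hom.ofLE (G₁ := G.induce A) (G₂ := H.induce A) fun _ _ hab => h hab),
    by rwa [Walk.length_map]⟩

lemma radiusAtMostTwo_of_forall {A : Set V} {v : V} (hv : v ∈ A)
    (h : ∀ x ∈ A, x ≠ v → G.Adj v x ∨ ∃ u ∈ A, G.Adj v u ∧ G.Adj u x) :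
    RadiusAtMostTwo G A := by
  refine ⟨⟨v, hv⟩, fun ⟨x, hx⟩ => ?_⟩
  by_cases hxv : x = v
  · subst hxv
    exact ⟨.nil, by simp⟩
  rcases h x hx hxv with hvx | ⟨u, hu, hvu, hux⟩
  · exact ⟨.cons (v := ⟨x, hx⟩) (induce_adj.mpr hvx) .nil, by simp⟩
  · exact ⟨.cons (v := ⟨u, hu⟩) (induce_adj.mpr hvu)
      (.cons (v := ⟨x, hx⟩) (induce_adj.mpr hux) .nil), by simp⟩

lemma subset_support_of_forall {A : Set V} {v : V} (hv : v ∈ G.support)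
    (h : ∀ x ∈ A, x ≠ v → G.Adj v x ∨ ∃ u ∈ A, G.Adj v u ∧ G.Adj u x) : A ⊆ G.support := by
  intro x hx
  by_cases hxv : x = v
  · exact hxv ▸ hv
  rcases h x hx hxv with h | ⟨u, -, -, h⟩ <;> exact h.mem_support_right

end Radius

section Counting

variable {V : Type*} [Fintype V] {G H : SimpleGraph V}

lemma triangleCount_eq_card_cliqueFinset [DecidableEq V] (G : SimpleGraph V) [DecidableRel G.Adj] :
    triangleCount G = #(G.cliqueFinset 3) := by
  rw [triangleCount, ← Set.ncard_coe_finset]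
  congr 1
  ext s
  simp

lemma trianglesWithin_eq_card [DecidableEq V] (G : SimpleGraph V) [DecidableRel G.Adj]
    (A : Finset V) : trianglesWithin G A = #{s ∈ G.cliqueFinset 3 | s ⊆ A} := by
  rw [trianglesWithin, ← Set.ncard_coe_finset]
  congr 1
  ext s
  simp

lemma wedgeCount_eq_sum_choose_degree (G : SimpleGraph V) [DecidableRel G.Adj] :
    wedgeCount G = ∑ v, (G.degree v).choose 2 := by
  refine sum_congr rfl fun v _ => ?_
  rw [← card_neighborFinset_eq_degree, ← Set.ncard_coe_finset]
  congr 2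
  ext u
  simp

lemma mul_wedgeCount_le_of_le_triangleDensity {δ : ℝ} (h : δ ≤ triangleDensity G) :
    δ * wedgeCount G ≤ 3 * triangleCount G := by
  unfold triangleDensity at h
  split_ifs at h with hw
  · simp [hw]
  · exact (le_div_iff₀ (by positivity)).mp h

lemma wedgeCount_mono (h : G ≤ H) : wedgeCount G ≤ wedgeCount H := by
  classical
  simp only [wedgeCount_eq_sum_choose_degree]
  exact sum_le_sum fun v _ => Nat.choose_le_choose 2 (degree_le_of_le h)

lemma trianglesWithin_mono (h : G ≤ H) (A : Set V) :
    trianglesWithin G A ≤ trianglesWithin H A :=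
  Set.ncard_le_ncard (fun _ hs => ⟨hs.1.mono h, hs.2⟩) (Set.toFinite _)

lemma edgesWithin_mono (h : G ≤ H) (A : Set V) : edgesWithin G A ≤ edgesWithin H A :=
  Set.ncard_le_ncard (fun _ he => ⟨edgeSet_mono h he.1, he.2⟩) (Set.toFinite _)

def IsTightCluster (G : SimpleGraph V) (ρ : ℝ) (A : Set V) : Prop :=
  ρ * ((A.ncard.choose 2 : ℕ) : ℝ) ≤ edgesWithin G A ∧
    ρ * ((A.ncard.choose 3 : ℕ) : ℝ) ≤ trianglesWithin G A ∧ RadiusAtMostTwo G A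

lemma IsTightCluster.mono {ρ : ℝ} {A : Set V} (h : G ≤ H) (hA : IsTightCluster G ρ A) :
    IsTightCluster H ρ A :=
  ⟨hA.1.trans (mod_cast edgesWithin_mono h A), hA.2.1.trans (mod_cast trianglesWithin_mono h A),
    RadiusAtMostTwo.mono h hA.2.2⟩

lemma IsTightCluster.anti {ρ ρ' : ℝ} {A : Set V} (hρ : ρ' ≤ ρ) (hA : IsTightCluster G ρ A) :
    IsTightCluster G ρ' A :=
  ⟨(mul_le_mul_of_nonneg_right hρ (Nat.cast_nonneg _)).trans hA.1,
    (mul_le_mul_of_nonneg_right hρ (Nat.cast_nonneg _)).trans hA.2.1, hA.2.2⟩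

lemma IsTightlyKnit.mono {ρ : ℝ} {k : ℕ} {F : Fin k → Set V} (h : G ≤ H)
    (hF : IsTightlyKnit G ρ F) : IsTightlyKnit H ρ F :=
  ⟨hF.1, fun i => IsTightCluster.mono h (hF.2 i)⟩

lemma IsTightlyKnit.anti {ρ ρ' : ℝ} {k : ℕ} {F : Fin k → Set V} (hρ : ρ' ≤ ρ)
    (hF : IsTightlyKnit G ρ F) : IsTightlyKnit G ρ' F :=
  ⟨hF.1, fun i => IsTightCluster.anti hρ (hF.2 i)⟩

lemma IsTightlyKnit.cons {ρ : ℝ} {k : ℕ} {F : Fin k → Set V} {A : Set V}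
    (hF : IsTightlyKnit G ρ F) (hA : IsTightCluster G ρ A) (hdisj : ∀ i, Disjoint A (F i)) :
    IsTightlyKnit G ρ (Fin.cons A F : Fin (k + 1) → Set V) := by
  refine ⟨fun i j hij => ?_, Fin.cases hA hF.2⟩
  cases i using Fin.cases <;> cases j using Fin.cases
  · exact absurd rfl hij
  · exact hdisj _
  · exact (hdisj _).symm
  · exact hF.1 _ _ fun h => hij (congrArg Fin.succ h)

lemma isTightCluster_of_card_le {θ D : ℝ} {A : Finset V} (hθ0 : 0 ≤ θ) (hθ1 : θ ≤ 1)
    (hA : (#A : ℝ) ≤ 4 * D) (hE : θ * D ^ 2 / 4 ≤ edgesWithin G A)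
    (hT : θ ^ 4 * D ^ 3 / 72 ≤ trianglesWithin G A) (hr : RadiusAtMostTwo G A) :
    IsTightCluster G (θ ^ 4 / 8192) A := by
  have hD : 0 ≤ D := by linarith [(Nat.cast_nonneg #A : (0 : ℝ) ≤ #A)]
  have hAD (k : ℕ) : ((#A).choose k : ℝ) ≤ (4 * D) ^ k :=
    (Nat.cast_le.mpr (Nat.choose_le_pow _ k)).trans (by push_cast; gcongr)
  have hθ4 : θ ^ 4 ≤ θ := by
    calc θ ^ 4 = θ * θ ^ 3 := by ring
      _ ≤ θ * 1 := by gcongr; exact pow_le_one₀ hθ0 hθ1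
      _ = θ := mul_one θ
  refine ⟨?_, ?_, hr⟩ <;> rw [Set.ncard_coe_finset]
  · nlinarith [mul_le_mul_of_nonneg_left (hAD 2) (by positivity : (0 : ℝ) ≤ θ ^ 4),
      mul_le_mul_of_nonneg_right hθ4 (sq_nonneg D)]
  · nlinarith [mul_le_mul_of_nonneg_left (hAD 3) (by positivity : (0 : ℝ) ≤ θ ^ 4),
      (by positivity : (0 : ℝ) ≤ θ ^ 4 * D ^ 3)]

/-- Requiring `F i ⊆ G.support` makes a family found after deleting all edges at `A` disjoint
from `A`. -/
def HasTightlyKnitFamily (G : SimpleGraph V) (ρ m : ℝ) : Prop :=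
  ∃ (k : ℕ) (F : Fin k → Set V), IsTightlyKnit G ρ F ∧ (∀ i, F i ⊆ G.support) ∧
    m ≤ ∑ i, (trianglesWithin G (F i) : ℝ)

lemma hasTightlyKnitFamily_of_nonpos {ρ m : ℝ} (hm : m ≤ 0) : HasTightlyKnitFamily G ρ m :=
  ⟨0, Fin.elim0, ⟨fun i => i.elim0, fun i => i.elim0⟩, fun i => i.elim0, by simpa using hm⟩

lemma HasTightlyKnitFamily.mono {ρ m m' : ℝ} (h : G ≤ H) (hm : m' ≤ m)
    (hG : HasTightlyKnitFamily G ρ m) : HasTightlyKnitFamily H ρ m' := by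
  obtain ⟨k, F, hF, hsupp, hcap⟩ := hG
  exact ⟨k, F, hF.mono h, fun i => (hsupp i).trans (support_mono h),
    hm.trans (hcap.trans (sum_le_sum fun i _ => mod_cast trianglesWithin_mono h (F i)))⟩

lemma HasTightlyKnitFamily.cons {ρ m : ℝ} {A : Set V} (h : G ≤ H) (hdisj : Disjoint A G.support)
    (hG : HasTightlyKnitFamily G ρ m) (hA : IsTightCluster H ρ A) (hAsupp : A ⊆ H.support) :
    HasTightlyKnitFamily H ρ (trianglesWithin H A + m) := by
  obtain ⟨k, F, hF, hsupp, hcap⟩ := hG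
  refine ⟨k + 1, Fin.cons A F, (hF.mono h).cons hA fun i => hdisj.mono_right (hsupp i),
    Fin.cases hAsupp fun i => (hsupp i).trans (support_mono h), ?_⟩
  simp only [Fin.sum_univ_succ, Fin.cons_zero, Fin.cons_succ]
  gcongr
  exact hcap.trans (sum_le_sum fun i _ => mod_cast trianglesWithin_mono h (F i))

end Counting

section Selection

variable {ι : Type*}

lemma Finset.card_filter_le_mul_le_sum (C : Finset ι) (g : ι → ℝ) (t : ℝ)
    (hg : ∀ x ∈ C, 0 ≤ g x) : #{x ∈ C | t ≤ g x} * t ≤ ∑ x ∈ C, g x := calc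
  #{x ∈ C | t ≤ g x} * t ≤ ∑ x ∈ C with t ≤ g x, g x := by
    simpa using card_nsmul_le_sum _ g t fun x hx => (mem_filter.mp hx).2
  _ ≤ ∑ x ∈ C, g x := sum_le_sum_of_subset_of_nonneg (filter_subset _ _) fun x hx _ => hg x hx

/-- Where `g < t` we have `w ≤ g² ≤ t g`, so these elements carry at most `t E` of the mass. -/
lemma Finset.sum_sub_mul_le_sum_filter (C : Finset ι) (g w : ι → ℝ) {E t : ℝ} (ht : 0 ≤ t)
    (hg : ∀ x ∈ C, 0 ≤ g x) (hwg : ∀ x ∈ C, w x ≤ g x ^ 2) (hE : ∑ x ∈ C, g x ≤ E) :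
    ∑ x ∈ C, w x - t * E ≤ ∑ x ∈ C with t ≤ g x, w x := by
  have hlight : ∑ x ∈ C with ¬ t ≤ g x, w x ≤ t * E := calc
    _ ≤ ∑ x ∈ C with ¬ t ≤ g x, t * g x := sum_le_sum fun x hx => by
        obtain ⟨hxC, hx⟩ := mem_filter.mp hx
        nlinarith [hwg x hxC, hg x hxC]
    _ ≤ ∑ x ∈ C, t * g x := sum_le_sum_of_subset_of_nonneg (filter_subset _ _)
        fun x hx _ => mul_nonneg ht (hg x hx)
    _ ≤ t * E := by rw [← mul_sum]; exact mul_le_mul_of_nonneg_left hE ht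
  linarith [sum_filter_add_sum_filter_not C (t ≤ g ·) w]

variable [DecidableEq ι]

lemma Finset.exists_subset_card_eq_forall_le {α : Type*} [LinearOrder α] (f : ι → α) (k : ℕ) :
    ∀ s : Finset ι, k ≤ #s → ∃ r ⊆ s, #r = k ∧ ∀ a ∈ r, ∀ b ∈ s \ r, f b ≤ f a := by
  induction k with
  | zero => exact fun s _ => ⟨∅, empty_subset _, card_empty, by simp⟩
  | succ k ih =>
    intro s hk
    obtain ⟨m, hm, hmax⟩ := exists_max_image s f (card_pos.mp (by omega))
    obtain ⟨r, hrs, hr, hdom⟩ := ih (s.erase m) (by rw [card_erase_of_mem hm]; omega)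
    have hmr : m ∉ r := fun h => (mem_erase.mp (hrs h)).1 rfl
    refine ⟨insert m r, insert_subset hm (hrs.trans (erase_subset _ _)),
      by rw [card_insert_of_notMem hmr, hr], fun a ha b hb => ?_⟩
    simp only [mem_sdiff, mem_insert, not_or] at hb
    rcases mem_insert.mp ha with rfl | ha
    · exact hmax b hb.1
    · exact hdom a ha b (mem_sdiff.mpr ⟨mem_erase.mpr ⟨hb.2.1, hb.1⟩, hb.2.2⟩)

lemma Finset.exists_subset_card_eq_mul_sum_le {R : Type*} [CommSemiring R] [LinearOrder R]
    [IsOrderedRing R] (f : ι → R) {s : Finset ι} {k : ℕ} (hk : k ≤ #s) :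
    ∃ r ⊆ s, #r = k ∧ k * ∑ x ∈ s, f x ≤ #s * ∑ x ∈ r, f x := by
  obtain ⟨r, hrs, hr, hdom⟩ := exists_subset_card_eq_forall_le f k s hk
  refine ⟨r, hrs, hr, ?_⟩
  have hout : ∀ b ∈ s \ r, k * f b ≤ ∑ x ∈ r, f x := fun b hb => by
    simpa [hr] using card_nsmul_le_sum r f (f b) fun a ha => hdom a ha b hb
  calc (k : R) * ∑ x ∈ s, f x = k * ∑ x ∈ r, f x + ∑ b ∈ s \ r, k * f b := by
        rw [← sum_sdiff hrs, mul_add, mul_sum, add_comm]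
    _ ≤ k * ∑ x ∈ r, f x + ∑ _b ∈ s \ r, ∑ x ∈ r, f x := by gcongr with b hb; exact hout b hb
    _ = #s * ∑ x ∈ r, f x := by
        rw [sum_const, card_sdiff_of_subset hrs, nsmul_eq_mul, ← add_mul, ← Nat.cast_add, hr,
          Nat.add_sub_cancel' hk]

/-- At most `E / t` elements have `g ≥ t`, so the `K` heaviest of them keep a `K t / E` share of
their mass. -/
lemma Finset.exists_subset_heavy (C : Finset ι) (g w : ι → ℝ) {E t ρ : ℝ} (K : ℕ) (ht : 0 < t)
    (hρ : 0 ≤ ρ) (hρE : ρ ≤ E) (hρK : ρ ≤ K * t) (hg : ∀ x ∈ C, 0 ≤ g x) (hw : ∀ x ∈ C, 0 ≤ w x)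
    (hwg : ∀ x ∈ C, w x ≤ g x ^ 2) (hE : ∑ x ∈ C, g x ≤ E) :
    ∃ R ⊆ C, #R ≤ K ∧ (∀ x ∈ R, t ≤ g x) ∧ ρ * (∑ x ∈ C, w x - t * E) ≤ E * ∑ x ∈ R, w x := by
  set H := C.filter (t ≤ g ·)
  have hH : 0 ≤ ∑ x ∈ H, w x := sum_nonneg fun x hx => hw x (mem_filter.mp hx).1
  obtain ⟨R, hRH, hR, hsum⟩ := exists_subset_card_eq_mul_sum_le w (min_le_right K #H)
  have hRw : 0 ≤ ∑ x ∈ R, w x := sum_nonneg fun x hx => hw x (mem_filter.mp (hRH hx)).1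
  refine ⟨R, hRH.trans (filter_subset _ _), hR ▸ min_le_left _ _,
    fun x hx => (mem_filter.mp (hRH hx)).2, ?_⟩
  calc ρ * (∑ x ∈ C, w x - t * E) ≤ ρ * ∑ x ∈ H, w x :=
        mul_le_mul_of_nonneg_left (sum_sub_mul_le_sum_filter C g w ht.le hg hwg hE) hρ
    _ ≤ E * ∑ x ∈ R, w x := by
      rcases le_total #H K with hK | hK
      · rw [min_eq_right hK] at hR
        rw [eq_of_subset_of_card_le hRH hR.ge]
        exact mul_le_mul_of_nonneg_right hρE hH
      · rw [min_eq_left hK] at hsum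
        have hcount := (card_filter_le_mul_le_sum C g t hg).trans hE
        calc ρ * ∑ x ∈ H, w x ≤ t * (K * ∑ x ∈ H, w x) := by nlinarith
          _ ≤ t * (#H * ∑ x ∈ R, w x) := by gcongr
          _ ≤ E * ∑ x ∈ R, w x := by nlinarith

end Selection

namespace SimpleGraph

variable {V : Type*} {G : SimpleGraph V} {v : V}

lemma IsNClique.deleteEdges {n : ℕ} {s : Finset V} {E : Set (Sym2 V)} (hs : G.IsNClique n s)
    (h : ∀ x ∈ s, ∀ y ∈ s, s(x, y) ∉ E) : (G.deleteEdges E).IsNClique n s :=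
  ⟨fun x hx y hy hxy => deleteEdges_adj.mpr ⟨hs.1 hx hy hxy, h x hx y hy⟩, hs.2⟩

lemma deleteEdges_lt {E : Set (Sym2 V)} {e : Sym2 V} (he : e ∈ G.edgeSet) (heE : e ∈ E) :
    G.deleteEdges E < G := by
  refine (deleteEdges_le E).lt_of_ne fun h => ?_
  have he' : e ∈ (G.deleteEdges E).edgeSet := by rwa [h]
  rw [edgeSet_deleteEdges] at he'
  exact he'.2 heE

def deleteIncidenceSets (G : SimpleGraph V) (A : Set V) : SimpleGraph V :=
  G.deleteEdges {e | ∃ x ∈ e, x ∈ A}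

lemma disjoint_support_deleteIncidenceSets (A : Set V) :
    Disjoint A (G.deleteIncidenceSets A).support := by
  refine Set.disjoint_left.mpr fun x hx hsupp => ?_
  obtain ⟨y, hxy⟩ := (mem_support _).mp hsupp
  rw [deleteIncidenceSets, deleteEdges_adj] at hxy
  exact hxy.2 ⟨x, Sym2.mem_mk_left x y, hx⟩

variable [Fintype V]

lemma card_le_two_mul_edgesWithin [DecidableEq V] {A : Set V} (P : Finset (V × V))
    (hP : ∀ p ∈ P, G.Adj p.1 p.2 ∧ p.1 ∈ A ∧ p.2 ∈ A) : #P ≤ 2 * edgesWithin G A := by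
  refine (card_le_mul_card_image (f := fun p => s(p.1, p.2)) P 2 fun e he => ?_).trans
    (Nat.mul_le_mul_left 2 ?_)
  · obtain ⟨q, -, rfl⟩ := mem_image.mp he
    refine (card_le_card fun p hp => ?_).trans (card_le_two (a := q) (b := q.swap))
    obtain ⟨-, hp⟩ := mem_filter.mp hp
    rcases Sym2.mk_eq_mk_iff.mp hp with rfl | rfl <;> simp
  · rw [edgesWithin, ← Set.ncard_coe_finset]
    refine Set.ncard_le_ncard ?_ (Set.toFinite _)
    intro e he
    obtain ⟨p, hp, rfl⟩ := mem_image.mp he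
    obtain ⟨hadj, h1, h2⟩ := hP p hp
    exact ⟨hadj, fun x hx => by rcases Sym2.mem_iff.mp hx with rfl | rfl <;> assumption⟩

variable [DecidableRel G.Adj]

def codegree (G : SimpleGraph V) [DecidableRel G.Adj] (a b : V) : ℕ :=
  #{x | G.Adj a x ∧ G.Adj b x}

lemma codegree_self (v : V) : G.codegree v v = G.degree v := by
  simp [codegree, ← card_neighborFinset_eq_degree, neighborFinset_eq_filter]

lemma sum_codegree (v : V) : ∑ x, G.codegree v x = ∑ u ∈ G.neighborFinset v, G.degree u := by
  simp only [codegree, card_filter, ← card_neighborFinset_eq_degree, neighborFinset_eq_filter,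
    sum_filter]
  rw [sum_comm]
  refine sum_congr rfl fun u _ => ?_
  split_ifs with h <;> simp [h, adj_comm]

def linkDarts (G : SimpleGraph V) [DecidableRel G.Adj] (v : V) : Finset (V × V) :=
  {p ∈ G.neighborFinset v ×ˢ G.neighborFinset v | G.Adj p.1 p.2}

def linkWeight (G : SimpleGraph V) [DecidableRel G.Adj] (v x : V) : ℕ :=
  #{p ∈ G.linkDarts v | G.Adj p.1 x ∧ G.Adj p.2 x}

lemma sum_linkDarts_fst {M : Type*} [AddCommMonoid M] (f : V → M) :
    ∑ p ∈ G.linkDarts v, f p.1 = ∑ u ∈ G.neighborFinset v, G.codegree v u • f u := by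
  rw [linkDarts, sum_filter, sum_product]
  refine sum_congr rfl fun u _ => ?_
  rw [← sum_filter]
  simp only [sum_const, codegree]
  congr 2
  ext x
  simp

lemma sum_linkDarts_snd {M : Type*} [AddCommMonoid M] (f : V → M) :
    ∑ p ∈ G.linkDarts v, f p.2 = ∑ p ∈ G.linkDarts v, f p.1 :=
  sum_nbij' Prod.swap Prod.swap (by simp [linkDarts, adj_comm, and_comm])
    (by simp [linkDarts, adj_comm, and_comm]) (by simp) (by simp) (by simp)

lemma card_linkDarts : #(G.linkDarts v) = ∑ u ∈ G.neighborFinset v, G.codegree v u := by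
  rw [card_eq_sum_ones, sum_linkDarts_fst (fun _ => 1)]
  simp

lemma sum_linkWeight : ∑ x, G.linkWeight v x = ∑ p ∈ G.linkDarts v, G.codegree p.1 p.2 := by
  simp only [linkWeight, codegree, card_filter]
  exact sum_comm

lemma linkWeight_le_sq (x : V) : G.linkWeight v x ≤ G.codegree v x ^ 2 := by
  rw [linkWeight, codegree, sq, ← card_product]
  refine card_le_card fun p hp => ?_
  simp only [linkDarts, mem_filter, mem_product, mem_neighborFinset] at hp
  simp [hp.1.1.1, hp.1.1.2, hp.2.1.symm, hp.2.2.symm]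

variable [DecidableEq V]

lemma codegree_add_one_le_degree {u : V} (h : G.Adj v u) : G.codegree v u + 1 ≤ G.degree u := by
  rw [← card_neighborFinset_eq_degree, ← card_erase_add_one ((mem_neighborFinset _ _ _).mpr h.symm)]
  refine Nat.add_le_add_right (card_le_card fun x hx => ?_) 1
  simp only [mem_filter, mem_univ, true_and] at hx
  simp [hx.2, hx.1.ne']

lemma IsNClique.sub_one_le_degree {n : ℕ} {s : Finset V} {a : V} (hs : G.IsNClique n s)
    (ha : a ∈ s) : n - 1 ≤ G.degree a := by
  rw [← (hs.erase_of_mem ha).2, ← card_neighborFinset_eq_degree]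
  exact card_le_card fun x hx =>
    (mem_neighborFinset _ _ _).mpr (hs.1 ha (mem_of_mem_erase hx) (ne_of_mem_erase hx).symm)

lemma card_cliqueFinset_le_deleteEdges_add {n : ℕ} (E : Set (Sym2 V)) [DecidablePred (· ∈ E)]
    (P : Finset V → Prop) [DecidablePred P]
    (h : ∀ s, G.IsNClique n s → ¬ P s → ∀ x ∈ s, ∀ y ∈ s, s(x, y) ∉ E) :
    #(G.cliqueFinset n) ≤ #((G.deleteEdges E).cliqueFinset n) + #{s ∈ G.cliqueFinset n | P s} := by
  rw [← card_filter_add_card_filter_not (s := G.cliqueFinset n) P, add_comm]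
  gcongr
  intro s hs
  simp only [mem_filter, mem_cliqueFinset_iff] at hs ⊢
  exact hs.1.deleteEdges (h s hs.1 hs.2)

lemma card_cliqueFinset_superset_le {n : ℕ} (t : Finset V) :
    #{s ∈ G.cliqueFinset n | t ⊆ s} ≤ (#{x | ∀ y ∈ t, G.Adj y x}).choose (n - #t) := by
  rw [← card_powersetCard]
  refine card_le_card_of_injOn (· \ t) (fun s hs => ?_) (fun s hs s' hs' h => ?_)
  · simp only [coe_filter, mem_cliqueFinset_iff, Set.mem_ofPred_eq] at hs
    rw [mem_coe, mem_powersetCard, card_sdiff_of_subset hs.2, hs.1.2]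
    refine ⟨fun x hx => ?_, rfl⟩
    simp only [mem_sdiff] at hx
    simp only [mem_filter, mem_univ, true_and]
    exact fun y hy => hs.1.1 (hs.2 hy) hx.1 (ne_of_mem_of_not_mem hy hx.2)
  · simp only [coe_filter, Set.mem_ofPred_eq] at hs hs'
    simpa [sdiff_union_of_subset hs.2, sdiff_union_of_subset hs'.2] using congrArg (· ∪ t) h

lemma exists_forall_degree_le_of_triangleCount_pos (ht : 0 < triangleCount G) :
    ∃ v, 2 ≤ G.degree v ∧ ∀ u, G.degree u ≤ G.degree v := by
  rw [triangleCount_eq_card_cliqueFinset] at ht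
  obtain ⟨s, hs⟩ := card_pos.mp ht
  rw [mem_cliqueFinset_iff] at hs
  obtain ⟨a, ha⟩ := card_pos.mp (hs.2 ▸ three_pos : 0 < #s)
  obtain ⟨v, -, hvmax⟩ := exists_max_image univ (fun x => G.degree x) ⟨a, mem_univ a⟩
  exact ⟨v, (hs.sub_one_le_degree ha).trans (hvmax a (mem_univ a)), fun u => hvmax u (mem_univ u)⟩

section DeleteEdge

variable {a b : V}

lemma degree_deleteEdges_add_one_left (hab : G.Adj a b) :
    (G.deleteEdges {s(a, b)}).degree a + 1 = G.degree a := by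
  have : (G.deleteEdges {s(a, b)}).neighborFinset a = (G.neighborFinset a).erase b := by
    ext x
    simp [hab.ne]
    tauto
  rw [← card_neighborFinset_eq_degree, ← card_neighborFinset_eq_degree, this,
    card_erase_add_one ((mem_neighborFinset _ _ _).mpr hab)]

lemma degree_deleteEdges_add_one_right (hab : G.Adj a b) :
    (G.deleteEdges {s(a, b)}).degree b + 1 = G.degree b := by
  have : (G.deleteEdges {s(a, b)}).neighborFinset b = (G.neighborFinset b).erase a := by
    ext x
    simp [hab.ne']
    tauto
  rw [← card_neighborFinset_eq_degree, ← card_neighborFinset_eq_degree, this,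
    card_erase_add_one ((mem_neighborFinset _ _ _).mpr hab.symm)]

lemma degree_deleteEdges_of_ne {x : V} (ha : x ≠ a) (hb : x ≠ b) :
    (G.deleteEdges {s(a, b)}).degree x = G.degree x := by
  rw [← card_neighborFinset_eq_degree, ← card_neighborFinset_eq_degree]
  congr 1
  ext y
  simp [ha, hb]

lemma wedgeCount_eq_deleteEdges_add (hab : G.Adj a b) :
    wedgeCount G = wedgeCount (G.deleteEdges {s(a, b)}) +
      (G.deleteEdges {s(a, b)}).degree a + (G.deleteEdges {s(a, b)}).degree b := by
  have hb : b ∈ univ.erase a := mem_erase.2 ⟨hab.ne.symm, mem_univ b⟩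
  have hrest : ∑ x ∈ (univ.erase a).erase b, (G.degree x).choose 2 =
      ∑ x ∈ (univ.erase a).erase b, ((G.deleteEdges {s(a, b)}).degree x).choose 2 :=
    sum_congr rfl fun x hx => by
      rw [degree_deleteEdges_of_ne (ne_of_mem_erase (mem_of_mem_erase hx)) (ne_of_mem_erase hx)]
  simp only [wedgeCount_eq_sum_choose_degree]
  rw [← add_sum_erase _ _ (mem_univ a), ← add_sum_erase _ _ hb, ← add_sum_erase _ _ (mem_univ a),
    ← add_sum_erase _ _ hb, hrest,
    ← degree_deleteEdges_add_one_left hab, ← degree_deleteEdges_add_one_right hab,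
    Nat.choose_succ_succ', Nat.choose_succ_succ', Nat.choose_one_right, Nat.choose_one_right]
  ring

lemma triangleCount_le_deleteEdges_add_codegree (hab : G.Adj a b) :
    triangleCount G ≤ triangleCount (G.deleteEdges {s(a, b)}) + G.codegree a b := by
  rw [triangleCount_eq_card_cliqueFinset, triangleCount_eq_card_cliqueFinset]
  refine (card_cliqueFinset_le_deleteEdges_add {s(a, b)} (fun s => {a, b} ⊆ s) ?_).trans ?_
  · intro s _ hab' x hx y hy hxy
    rw [Set.mem_singleton_iff, Sym2.eq_iff] at hxy
    rcases hxy with ⟨rfl, rfl⟩ | ⟨rfl, rfl⟩ <;> exact hab' (by simp [insert_subset_iff, hx, hy])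
  · gcongr
    refine (card_cliqueFinset_superset_le _).trans_eq ?_
    rw [card_pair hab.ne]
    simp [codegree]

lemma triangleCount_sub_wedgeCount_le_deleteEdges {θ : ℝ} (hab : G.Adj a b)
    (hsparse : (G.codegree a b : ℝ) < θ * (G.degree a + G.degree b - 2)) :
    (triangleCount G : ℝ) - θ * wedgeCount G ≤
      triangleCount (G.deleteEdges {s(a, b)}) - θ * wedgeCount (G.deleteEdges {s(a, b)}) := by
  have ht : (triangleCount G : ℝ) ≤ triangleCount (G.deleteEdges {s(a, b)}) + G.codegree a b :=
    mod_cast triangleCount_le_deleteEdges_add_codegree hab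
  have hw : (wedgeCount G : ℝ) = wedgeCount (G.deleteEdges {s(a, b)}) +
      (G.deleteEdges {s(a, b)}).degree a + (G.deleteEdges {s(a, b)}).degree b :=
    mod_cast wedgeCount_eq_deleteEdges_add hab
  rw [← degree_deleteEdges_add_one_left hab, ← degree_deleteEdges_add_one_right hab] at hsparse
  push_cast at hsparse
  rw [hw]
  linarith

end DeleteEdge

lemma triangleCount_le_deleteIncidenceSets_add (A : Finset V) {Δ : ℕ}
    (hΔ : ∀ y, G.degree y ≤ Δ) :
    triangleCount G ≤ triangleCount (G.deleteIncidenceSets A) + #A * Δ.choose 2 := by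
  classical
  unfold deleteIncidenceSets
  rw [triangleCount_eq_card_cliqueFinset, triangleCount_eq_card_cliqueFinset]
  refine (card_cliqueFinset_le_deleteEdges_add {e | ∃ x ∈ e, x ∈ (A : Set V)}
    (fun s => ∃ y ∈ A, {y} ⊆ s) ?_).trans ?_
  · rintro s - hs x hx y hy ⟨z, hz, hzA⟩
    rcases Sym2.mem_iff.mp hz with rfl | rfl
    · exact hs ⟨z, hzA, singleton_subset_iff.mpr hx⟩
    · exact hs ⟨z, hzA, singleton_subset_iff.mpr hy⟩
  gcongr
  calc #{s ∈ G.cliqueFinset 3 | ∃ y ∈ A, {y} ⊆ s}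
      ≤ #(A.biUnion fun y => {s ∈ G.cliqueFinset 3 | {y} ⊆ s}) := by
        refine card_le_card fun s hs => ?_
        simp only [mem_filter, mem_biUnion] at hs ⊢
        obtain ⟨hs, y, hy, hys⟩ := hs
        exact ⟨y, hy, hs, hys⟩
    _ ≤ ∑ y ∈ A, #{s ∈ G.cliqueFinset 3 | {y} ⊆ s} := card_biUnion_le
    _ ≤ ∑ _y ∈ A, Δ.choose 2 := sum_le_sum fun y _ => by
        refine (card_cliqueFinset_superset_le {y}).trans ?_
        simpa [← neighborFinset_eq_filter] using Nat.choose_le_choose 2 (hΔ y)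
    _ = #A * Δ.choose 2 := by rw [sum_const, smul_eq_mul]

lemma card_le_mul_trianglesWithin {A : Finset V} (Q : Finset ((V × V) × V))
    (hQ : ∀ q ∈ Q, G.IsNClique 3 {q.1.1, q.1.2, q.2} ∧ {q.1.1, q.1.2, q.2} ⊆ A) :
    #Q ≤ 27 * trianglesWithin G A := by
  rw [trianglesWithin_eq_card]
  refine (card_le_mul_card_image (f := fun q => {q.1.1, q.1.2, q.2}) Q 27 fun s hs => ?_).trans
    (Nat.mul_le_mul_left 27 (card_le_card fun s hs => ?_))
  · obtain ⟨q, hq, rfl⟩ := mem_image.mp hs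
    calc #{x ∈ Q | {x.1.1, x.1.2, x.2} = ({q.1.1, q.1.2, q.2} : Finset V)}
        ≤ #((({q.1.1, q.1.2, q.2} : Finset V) ×ˢ {q.1.1, q.1.2, q.2}) ×ˢ {q.1.1, q.1.2, q.2}) :=
          card_le_card fun x hx => by
            obtain ⟨-, hx⟩ := mem_filter.mp hx
            simp only [mem_product, ← hx, mem_insert, mem_singleton, true_or, or_true, and_self]
      _ = 27 := by rw [card_product, card_product, (hQ q hq).1.2]
  · obtain ⟨q, hq, rfl⟩ := mem_image.mp hs
    simpa using hQ q hq

lemma card_linkDarts_le_sum :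
    (#(G.linkDarts v) : ℝ) ≤ ∑ u ∈ G.neighborFinset v, ((G.degree u : ℝ) - 1) := by
  rw [card_linkDarts, Nat.cast_sum]
  refine sum_le_sum fun u hu => le_sub_iff_add_le.mpr ?_
  exact_mod_cast codegree_add_one_le_degree ((mem_neighborFinset _ _ _).mp hu)

lemma sum_erase_codegree (v : V) :
    ∑ x ∈ univ.erase v, (G.codegree v x : ℝ) =
      ∑ u ∈ G.neighborFinset v, ((G.degree u : ℝ) - 1) := by
  have h := add_sum_erase univ (G.codegree v) (mem_univ v)
  rw [codegree_self, sum_codegree] at h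
  have h' : (G.degree v : ℝ) + ∑ x ∈ univ.erase v, (G.codegree v x : ℝ) =
      ∑ u ∈ G.neighborFinset v, (G.degree u : ℝ) := mod_cast h
  rw [sum_sub_distrib, sum_const, card_neighborFinset_eq_degree, nsmul_one]
  linarith

lemma card_linkDarts_le_two_mul_edgesWithin {A : Set V} (hA : ↑(G.neighborFinset v) ⊆ A) :
    #(G.linkDarts v) ≤ 2 * edgesWithin G A :=
  card_le_two_mul_edgesWithin _ fun p hp => by
    simp only [linkDarts, mem_filter, mem_product] at hp
    exact ⟨hp.2, hA hp.1.1, hA hp.1.2⟩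

lemma sum_linkWeight_le_mul_trianglesWithin {A : Finset V} (hA : G.neighborFinset v ⊆ A) :
    ∑ x ∈ A, G.linkWeight v x ≤ 27 * trianglesWithin G A := by
  have hsum : ∑ x ∈ A, G.linkWeight v x =
      #{q ∈ G.linkDarts v ×ˢ A | G.Adj q.1.1 q.2 ∧ G.Adj q.1.2 q.2} := by
    simp only [linkWeight, card_filter, sum_product_right]
  rw [hsum]
  refine card_le_mul_trianglesWithin _ fun q hq => ?_
  simp only [linkDarts, mem_filter, mem_product] at hq
  obtain ⟨⟨⟨⟨h1, h2⟩, h12⟩, hx⟩, h1x, h2x⟩ := hq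
  exact ⟨is3Clique_triple_iff.mpr ⟨h12, h1x, h2x⟩, by simp [insert_subset_iff, hA h1, hA h2, hx]⟩

def IsClean (G : SimpleGraph V) [DecidableRel G.Adj] (θ : ℝ) : Prop :=
  ∀ ⦃a b⦄, G.Adj a b → θ * ((G.degree a : ℝ) + G.degree b - 2) ≤ G.codegree a b

namespace IsClean

variable {θ : ℝ}

lemma mul_degree_sub_one_le_codegree (hG : G.IsClean θ) (hθ : 0 ≤ θ) {u : V}
    (hvu : G.Adj v u) : θ * ((G.degree v : ℝ) - 1) ≤ G.codegree v u := by
  have hu : (1 : ℝ) ≤ G.degree u :=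
    mod_cast (Nat.le_add_left 1 _).trans (codegree_add_one_le_degree hvu)
  calc θ * ((G.degree v : ℝ) - 1) ≤ θ * ((G.degree v : ℝ) + G.degree u - 2) :=
        mul_le_mul_of_nonneg_left (by linarith) hθ
    _ ≤ G.codegree v u := hG hvu

lemma mul_le_card_linkDarts (hG : G.IsClean θ) (hθ : 0 ≤ θ) :
    θ * G.degree v * ((G.degree v : ℝ) - 1) ≤ #(G.linkDarts v) := by
  rw [card_linkDarts, Nat.cast_sum]
  calc θ * G.degree v * ((G.degree v : ℝ) - 1)
      = ∑ _u ∈ G.neighborFinset v, θ * ((G.degree v : ℝ) - 1) := by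
        rw [sum_const, card_neighborFinset_eq_degree, nsmul_eq_mul]; ring
    _ ≤ ∑ u ∈ G.neighborFinset v, (G.codegree v u : ℝ) := sum_le_sum fun u hu =>
        hG.mul_degree_sub_one_le_codegree hθ ((mem_neighborFinset _ _ _).mp hu)

lemma sum_linkWeight_ge (hG : G.IsClean θ) (hθ : 0 ≤ θ) :
    2 * θ ^ 2 * ((G.degree v : ℝ) - 1) * ∑ u ∈ G.neighborFinset v, ((G.degree u : ℝ) - 1) ≤
      ∑ x, (G.linkWeight v x : ℝ) := by
  have hpair : ∀ p ∈ G.linkDarts v,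
      θ * (((G.degree p.1 : ℝ) - 1) + ((G.degree p.2 : ℝ) - 1)) ≤ G.codegree p.1 p.2 :=
    fun p hp => (le_of_eq (by ring)).trans (hG (mem_filter.mp hp).2)
  calc 2 * θ ^ 2 * ((G.degree v : ℝ) - 1) * ∑ u ∈ G.neighborFinset v, ((G.degree u : ℝ) - 1)
      = 2 * θ * ∑ u ∈ G.neighborFinset v,
          θ * ((G.degree v : ℝ) - 1) * ((G.degree u : ℝ) - 1) := by
        simp only [mul_sum]; exact sum_congr rfl fun _ _ => by ring
    _ ≤ 2 * θ * ∑ u ∈ G.neighborFinset v, (G.codegree v u : ℝ) * ((G.degree u : ℝ) - 1) := by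
        gcongr with u hu
        · have := codegree_add_one_le_degree ((mem_neighborFinset _ _ _).mp hu)
          have : (1 : ℝ) ≤ G.degree u := mod_cast (Nat.le_add_left 1 _).trans this
          linarith
        · exact hG.mul_degree_sub_one_le_codegree hθ ((mem_neighborFinset _ _ _).mp hu)
    _ = θ * ∑ p ∈ G.linkDarts v, (((G.degree p.1 : ℝ) - 1) + ((G.degree p.2 : ℝ) - 1)) := by
        rw [sum_add_distrib, sum_linkDarts_snd (fun u => (G.degree u : ℝ) - 1),
          sum_linkDarts_fst (fun u => (G.degree u : ℝ) - 1)]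
        simp only [nsmul_eq_mul]
        ring
    _ ≤ ∑ p ∈ G.linkDarts v, (G.codegree p.1 p.2 : ℝ) := by rw [mul_sum]; exact sum_le_sum hpair
    _ = ∑ x, (G.linkWeight v x : ℝ) := by exact_mod_cast sum_linkWeight.symm

lemma exists_sum_linkWeight_ge (hG : G.IsClean θ) (hθ0 : 0 < θ) (hθ1 : θ ≤ 1) (hv : 2 ≤ G.degree v) :
    ∃ R ⊆ univ.erase v, #R ≤ 2 * G.degree v ∧ (∀ x ∈ R, 0 < G.codegree v x) ∧
      3 / 8 * θ ^ 4 * (G.degree v : ℝ) ^ 3 ≤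
        G.linkWeight v v + ∑ x ∈ R, (G.linkWeight v x : ℝ) := by
  have hD : (2 : ℝ) ≤ G.degree v := mod_cast hv
  have he := (hG.mul_le_card_linkDarts (v := v) hθ0.le).trans card_linkDarts_le_sum
  have hW := hG.sum_linkWeight_ge (v := v) hθ0.le
  have hsplit := add_sum_erase univ (fun x => (G.linkWeight v x : ℝ)) (mem_univ v)
  set D : ℝ := (G.degree v : ℝ)
  set e : ℝ := ∑ u ∈ G.neighborFinset v, ((G.degree u : ℝ) - 1)
  have hρ : 0 ≤ θ ^ 2 * D * (D - 1) :=
    mul_nonneg (mul_nonneg (sq_nonneg θ) (by linarith)) (by linarith)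
  have hρe : θ ^ 2 * D * (D - 1) ≤ e := by nlinarith
  obtain ⟨R, hRC, hRK, hRt, hsel⟩ := exists_subset_heavy (univ.erase v)
    (fun x => (G.codegree v x : ℝ)) (fun x => (G.linkWeight v x : ℝ)) (t := θ ^ 2 * (D - 1) / 2)
    (2 * G.degree v) (by have := pow_pos hθ0 2; nlinarith) hρ hρe (le_of_eq (by push_cast; ring))
    (fun _ _ => Nat.cast_nonneg _) (fun _ _ => Nat.cast_nonneg _)
    (fun x _ => mod_cast linkWeight_le_sq x) (sum_erase_codegree v).le
  refine ⟨R, hRC, hRK, fun x hx => ?_, ?_⟩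
  · have := pow_pos hθ0 2
    exact_mod_cast (by nlinarith : (0 : ℝ) < θ ^ 2 * (D - 1) / 2).trans_le (hRt x hx)
  have hkept : 3 / 2 * θ ^ 2 * (D - 1) * e ≤
      G.linkWeight v v + ∑ x ∈ univ.erase v, (G.linkWeight v x : ℝ) - θ ^ 2 * (D - 1) / 2 * e := by
    linarith
  have key : e * (3 / 2 * θ ^ 4 * D * (D - 1) ^ 2) ≤
      e * (G.linkWeight v v + ∑ x ∈ R, (G.linkWeight v x : ℝ)) := by
    nlinarith [mul_le_mul_of_nonneg_left hkept hρ,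
      mul_le_mul_of_nonneg_right hρe (Nat.cast_nonneg (G.linkWeight v v) : (0 : ℝ) ≤ _)]
  have hD2 : D ^ 2 ≤ 4 * (D - 1) ^ 2 := by nlinarith
  calc 3 / 8 * θ ^ 4 * D ^ 3 ≤ 3 / 2 * θ ^ 4 * D * (D - 1) ^ 2 := by
        nlinarith [mul_le_mul_of_nonneg_left hD2 (by positivity : 0 ≤ θ ^ 4 * D)]
    _ ≤ _ := le_of_mul_le_mul_left key (by nlinarith [pow_pos hθ0 2])

lemma exists_cluster (hG : G.IsClean θ) (hθ0 : 0 < θ) (hθ1 : θ ≤ 1)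
    (hv : 2 ≤ G.degree v) :
    ∃ A : Finset V, v ∈ A ∧ #A ≤ 4 * G.degree v ∧
      (∀ x ∈ A, x ≠ v → G.Adj v x ∨ ∃ u ∈ A, G.Adj v u ∧ G.Adj u x) ∧
      θ * (G.degree v : ℝ) ^ 2 / 4 ≤ edgesWithin G A ∧
      θ ^ 4 * (G.degree v : ℝ) ^ 3 / 72 ≤ trianglesWithin G A := by
  obtain ⟨R, hRv, hRK, hRpos, hRw⟩ := hG.exists_sum_linkWeight_ge hθ0 hθ1 hv
  have hvR : v ∉ R := fun h => (mem_erase.mp (hRv h)).1 rfl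
  set A := insert v (G.neighborFinset v ∪ R)
  have hNA : G.neighborFinset v ⊆ A := subset_union_left.trans (subset_insert _ _)
  have hD : (2 : ℝ) ≤ G.degree v := mod_cast hv
  refine ⟨A, mem_insert_self _ _, ?_, fun x hx hxv => ?_, ?_, ?_⟩
  · have h1 : #A ≤ #(G.neighborFinset v ∪ R) + 1 := card_insert_le _ _
    have h2 := card_union_le (G.neighborFinset v) R
    rw [card_neighborFinset_eq_degree] at h2
    omega
  · rcases mem_union.mp ((mem_insert.mp hx).resolve_left hxv) with hx | hx
    · exact .inl ((mem_neighborFinset _ _ _).mp hx)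
    · obtain ⟨u, hu⟩ := card_pos.mp (hRpos x hx)
      simp only [mem_filter, mem_univ, true_and] at hu
      exact .inr ⟨u, hNA ((mem_neighborFinset _ _ _).mpr hu.1), hu.1, hu.2.symm⟩
  · have h1 := hG.mul_le_card_linkDarts (v := v) hθ0.le
    have h2 : (#(G.linkDarts v) : ℝ) ≤ 2 * edgesWithin G A :=
      mod_cast card_linkDarts_le_two_mul_edgesWithin (coe_subset.mpr hNA)
    have h3 : 0 ≤ θ * G.degree v * ((G.degree v : ℝ) - 2) :=
      mul_nonneg (by positivity) (by linarith)
    nlinarith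
  · have hsub : ∑ x ∈ insert v R, G.linkWeight v x ≤ ∑ x ∈ A, G.linkWeight v x :=
      sum_le_sum_of_subset (insert_subset_insert _ subset_union_right)
    rw [sum_insert hvR] at hsub
    have h27 := sum_linkWeight_le_mul_trianglesWithin hNA
    have : (G.linkWeight v v : ℝ) + ∑ x ∈ R, (G.linkWeight v x : ℝ) ≤ 27 * trianglesWithin G A :=
      mod_cast hsub.trans h27
    linarith

lemma exists_tightCluster (hG : G.IsClean θ) (hθ0 : 0 < θ) (hθ1 : θ ≤ 1)
    (ht : 0 < triangleCount G) :
    ∃ A : Finset V, A.Nonempty ∧ (A : Set V) ⊆ G.support ∧ IsTightCluster G (θ ^ 4 / 8192) A ∧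
      θ ^ 4 / 8192 * ((triangleCount G : ℝ) - triangleCount (G.deleteIncidenceSets A)) ≤
        trianglesWithin G A := by
  obtain ⟨v, hv, hvmax⟩ := exists_forall_degree_le_of_triangleCount_pos ht
  obtain ⟨A, hvA, hA, hadj, hE, hT⟩ := hG.exists_cluster hθ0 hθ1 hv
  have hAc : (#A : ℝ) ≤ 4 * G.degree v := mod_cast hA
  refine ⟨A, ⟨v, hvA⟩, subset_support_of_forall ((mem_support _).mpr
      ((G.degree_pos_iff_exists_adj v).mp (by omega))) hadj,
    isTightCluster_of_card_le hθ0.le hθ1 hAc hE hT (radiusAtMostTwo_of_forall hvA hadj), ?_⟩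
  have hdel : (triangleCount G : ℝ) ≤
      triangleCount (G.deleteIncidenceSets A) + #A * (G.degree v).choose 2 :=
    mod_cast triangleCount_le_deleteIncidenceSets_add A hvmax
  have hchoose : ((G.degree v).choose 2 : ℝ) ≤ (G.degree v : ℝ) ^ 2 :=
    mod_cast Nat.choose_le_pow _ 2
  calc θ ^ 4 / 8192 * ((triangleCount G : ℝ) - triangleCount (G.deleteIncidenceSets A))
      ≤ θ ^ 4 / 8192 * (4 * G.degree v * (G.degree v : ℝ) ^ 2) := by
        gcongr
        nlinarith [mul_le_mul hAc hchoose (Nat.cast_nonneg _) (by positivity)]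
    _ ≤ θ ^ 4 * (G.degree v : ℝ) ^ 3 / 72 := by
        nlinarith [(by positivity : (0 : ℝ) ≤ θ ^ 4 * (G.degree v : ℝ) ^ 3)]
    _ ≤ trianglesWithin G A := hT

end IsClean

end SimpleGraph

lemma hasTightlyKnitFamily_potential {V : Type*} [Fintype V] {θ : ℝ} (hθ0 : 0 < θ) (hθ1 : θ ≤ 1)
    (G : SimpleGraph V) :
    HasTightlyKnitFamily G (θ ^ 4 / 8192)
      (θ ^ 4 / 8192 * ((triangleCount G : ℝ) - θ * wedgeCount G)) := by
  classical
  induction G using WellFoundedLT.induction with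
  | ind G ih =>
  by_cases hclean : G.IsClean θ
  swap
  · obtain ⟨a, b, hab, hsparse⟩ :
        ∃ a b, G.Adj a b ∧ (G.codegree a b : ℝ) < θ * (G.degree a + G.degree b - 2) := by
      simpa [IsClean] using hclean
    have hG' : G.deleteEdges {s(a, b)} < G := deleteEdges_lt hab rfl
    have hpot := triangleCount_sub_wedgeCount_le_deleteEdges hab hsparse
    exact (ih _ hG').mono hG'.le (mul_le_mul_of_nonneg_left hpot (by positivity))
  rcases (triangleCount G).eq_zero_or_pos with ht | ht
  · exact hasTightlyKnitFamily_of_nonpos (by rw [ht]; nlinarith [(by positivity :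
      (0 : ℝ) ≤ θ ^ 4 / 8192 * (θ * wedgeCount G))])
  obtain ⟨A, ⟨x, hxA⟩, hAsupp, hA, hcapA⟩ := hclean.exists_tightCluster hθ0 hθ1 ht
  obtain ⟨y, hxy⟩ := (mem_support _).mp (hAsupp hxA)
  have hG' : G.deleteIncidenceSets A < G := deleteEdges_lt hxy ⟨x, Sym2.mem_mk_left x y, hxA⟩
  refine ((ih _ hG').cons hG'.le (disjoint_support_deleteIncidenceSets _) hA hAsupp).mono le_rfl ?_
  have hw : θ ^ 4 / 8192 * (θ * wedgeCount (G.deleteIncidenceSets A)) ≤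
      θ ^ 4 / 8192 * (θ * wedgeCount G) := by
    gcongr
    exact_mod_cast wedgeCount_mono hG'.le
  linarith

/-- Inverse theorem for triangle-dense graphs: there is an absolute constant `κ > 0`
such that every `δ`-triangle-dense finite simple graph admits a `κδ⁴`-tightly-knit
family capturing at least a `κδ⁴` fraction of its triangles. -/
theorem tightly_knit_inverse_theorem :
    ∃ κ : ℝ, 0 < κ ∧
      ∀ (V : Type) [Fintype V], ∀ (G : SimpleGraph V) (δ : ℝ),
        0 < δ → δ ≤ 1 → δ ≤ triangleDensity G →
          ∃ (k : ℕ) (F : Fin k → Set V), IsTightlyKnit G (κ * δ ^ 4) F ∧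
            κ * δ ^ 4 * (triangleCount G : ℝ) ≤ ∑ i, (trianglesWithin G (F i) : ℝ) := by
  refine ⟨(2 ^ 23)⁻¹, by positivity, fun V _ G δ hδ0 hδ1 hτ => ?_⟩
  obtain ⟨k, F, hF, -, hcap⟩ :=
    hasTightlyKnitFamily_potential (θ := δ / 4) (by positivity) (by linarith) G
  have hdense := mul_wedgeCount_le_of_le_triangleDensity hτ
  refine ⟨k, F, hF.anti (by nlinarith [pow_pos hδ0 4]), ?_⟩
  calc (2 ^ 23 : ℝ)⁻¹ * δ ^ 4 * triangleCount G = (δ / 4) ^ 4 / 8192 * (triangleCount G / 4) := by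
        ring
    _ ≤ (δ / 4) ^ 4 / 8192 * (triangleCount G - δ / 4 * wedgeCount G) := by gcongr; linarith
    _ ≤ _ := hcap
end

section
/- Let G be a PLB graph on n vertices with exponent γ > 1 and constant c₀. Then for every real c > 0 there is a constant C (depending only on c₀, γ, and c) such that for every natural number k ≥ 1, Σ_{d=1}^{k} d^c · n(d) ≤ C · n · Σ_{d=1}^{k} d^{c−γ}. -/
/-- The number of vertices of `G` of degree exactly `d`. -/
noncomputable def degCount {V : Type*} [Fintype V] (G : SimpleGraph V) (d : ℕ) : ℕ :=
  {v : V | {u | G.Adj v u}.ncard = d}.ncard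

/-- `G` is power-law bounded with exponent `γ` and constant `c₀` if for every `r ≥ 0`,
`Σ_{d=2^r}^{2^(r+1)} n(d) ≤ c₀ n Σ_{d=2^r}^{2^(r+1)} d^(-γ)`. -/
def IsPLB {V : Type*} [Fintype V] (G : SimpleGraph V) (γ c₀ : ℝ) : Prop :=
  ∀ r : ℕ,
    (∑ d ∈ Finset.Icc (2 ^ r : ℕ) (2 ^ (r + 1)), (degCount G d : ℝ)) ≤
      c₀ * (Fintype.card V : ℝ) *
        ∑ d ∈ Finset.Icc (2 ^ r : ℕ) (2 ^ (r + 1)), (d : ℝ) ^ (-γ)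

/-!
Split the degrees into dyadic blocks `[2^r, 2^(r+1)]` and put `q = 2^(c+1-γ)`. On block `r` the
weight `d^c` is at most `(2^(r+1))^c`, so the PLB condition bounds the block's contribution to the
moment by `c₀ n 2^(c+1) q^r`. Conversely each of the `2^r` terms of `Σ d^(c-γ)` over
`[2^r, 2^(r+1))` is at least `(2^r)^c (2^(r+1))^(-γ)`, so that block contributes at least
`2^(-γ) q^r`. With `R = ⌊log₂ k⌋`, the moment is thus dominated by
`Σ_{r ≤ R} q^r = 1 + q Σ_{r < R} q^r`, whose second part is controlled by the blocks `r < R` of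
`Σ_{d ≤ k} d^(c-γ)` and whose `1` is the term `d = 1`.
-/

open Finset

theorem Finset.sum_range_sum_Ico_of_monotone {M : Type*} [AddCommMonoid M] (f : ℕ → M)
    {u : ℕ → ℕ} (hu : Monotone u) (R : ℕ) :
    ∑ r ∈ range R, ∑ d ∈ Ico (u r) (u (r + 1)), f d = ∑ d ∈ Ico (u 0) (u R), f d := by
  induction R with
  | zero => simp
  | succ R ih => rw [sum_range_succ, ih, sum_Ico_consecutive f (hu R.zero_le) (hu R.le_succ)]

theorem Finset.sum_Icc_one_le_sum_range_sum_Icc_two_pow {M : Type*} [AddCommMonoid M]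
    [PartialOrder M] [IsOrderedAddMonoid M] {f : ℕ → M} (hf : ∀ d, 0 ≤ f d) {k R : ℕ}
    (hk : k < 2 ^ R) :
    ∑ d ∈ Icc 1 k, f d ≤ ∑ r ∈ range R, ∑ d ∈ Icc (2 ^ r) (2 ^ (r + 1)), f d :=
  calc ∑ d ∈ Icc 1 k, f d
      ≤ ∑ d ∈ Ico (2 ^ 0) (2 ^ R), f d :=
        sum_le_sum_of_subset_of_nonneg (Icc_subset_Ico_right hk) fun d _ _ => hf d
    _ = ∑ r ∈ range R, ∑ d ∈ Ico (2 ^ r) (2 ^ (r + 1)), f d :=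
        (sum_range_sum_Ico_of_monotone f (pow_right_mono₀ one_le_two) R).symm
    _ ≤ ∑ r ∈ range R, ∑ d ∈ Icc (2 ^ r) (2 ^ (r + 1)), f d :=
        sum_le_sum fun _ _ => sum_le_sum_of_subset_of_nonneg Ico_subset_Icc_self fun d _ _ => hf d

lemma two_rpow_add_one_sub (c γ : ℝ) : (2 : ℝ) ^ (c + 1 - γ) = 2 * 2 ^ c * 2 ^ (-γ) := by
  rw [sub_eq_add_neg, Real.rpow_add two_pos, Real.rpow_add_one two_ne_zero]
  ring

lemma rpow_mul_rpow_neg_le_rpow_sub {x y d c γ : ℝ} (hx : 0 < x) (hxd : x ≤ d) (hdy : d ≤ y)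
    (hc : 0 ≤ c) (hγ : 0 ≤ γ) : x ^ c * y ^ (-γ) ≤ d ^ (c - γ) := by
  have hd : 0 < d := hx.trans_le hxd
  rw [sub_eq_add_neg, Real.rpow_add hd]
  exact mul_le_mul (Real.rpow_le_rpow hx.le hxd hc)
    (Real.rpow_le_rpow_of_nonpos hd hdy (neg_nonpos.2 hγ)) (Real.rpow_nonneg (hd.le.trans hdy) _)
    (by positivity)

lemma sum_Icc_two_pow_rpow_neg_le {γ : ℝ} (hγ : 0 ≤ γ) (r : ℕ) :
    ∑ d ∈ Icc (2 ^ r : ℕ) (2 ^ (r + 1)), (d : ℝ) ^ (-γ) ≤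
      2 * 2 ^ r * ((2 : ℝ) ^ r) ^ (-γ) := by
  have hcard : #(Icc (2 ^ r) (2 ^ (r + 1))) ≤ 2 * 2 ^ r := by
    rw [Nat.card_Icc, pow_succ]
    have := Nat.one_le_two_pow (n := r)
    omega
  calc ∑ d ∈ Icc (2 ^ r : ℕ) (2 ^ (r + 1)), (d : ℝ) ^ (-γ)
      ≤ #(Icc (2 ^ r) (2 ^ (r + 1))) • ((2 : ℝ) ^ r) ^ (-γ) := by
        refine sum_le_card_nsmul _ _ _ fun d hd => ?_
        have hrd : (2 : ℝ) ^ r ≤ d := by exact_mod_cast (mem_Icc.1 hd).1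
        exact Real.rpow_le_rpow_of_nonpos (by positivity) hrd (neg_nonpos.2 hγ)
    _ ≤ 2 * 2 ^ r * ((2 : ℝ) ^ r) ^ (-γ) := by
        rw [nsmul_eq_mul]
        gcongr
        exact_mod_cast hcard

lemma two_rpow_neg_mul_pow_le_sum_Ico_two_pow_rpow {c γ : ℝ} (hc : 0 ≤ c) (hγ : 0 ≤ γ)
    (r : ℕ) :
    2 ^ (-γ) * ((2 : ℝ) ^ (c + 1 - γ)) ^ r ≤
      ∑ d ∈ Ico (2 ^ r : ℕ) (2 ^ (r + 1)), (d : ℝ) ^ (c - γ) := by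
  have hcard : #(Ico (2 ^ r) (2 ^ (r + 1))) = 2 ^ r := by
    rw [Nat.card_Ico, pow_succ]
    omega
  calc 2 ^ (-γ) * ((2 : ℝ) ^ (c + 1 - γ)) ^ r
      = #(Ico (2 ^ r) (2 ^ (r + 1))) • (((2 : ℝ) ^ r) ^ c * ((2 : ℝ) ^ (r + 1)) ^ (-γ)) := by
        rw [hcard, nsmul_eq_mul, two_rpow_add_one_sub, ← Real.rpow_pow_comm zero_le_two,
          ← Real.rpow_pow_comm zero_le_two]
        push_cast
        ring
    _ ≤ ∑ d ∈ Ico (2 ^ r : ℕ) (2 ^ (r + 1)), (d : ℝ) ^ (c - γ) :=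
        card_nsmul_le_sum _ _ _ fun d hd =>
          rpow_mul_rpow_neg_le_rpow_sub (by positivity) (by exact_mod_cast (mem_Ico.1 hd).1)
            (by exact_mod_cast (mem_Ico.1 hd).2.le) hc hγ

lemma sum_range_succ_two_rpow_pow_le {c γ : ℝ} (hc : 0 ≤ c) (hγ : 0 ≤ γ) {k R : ℕ}
    (hk : 1 ≤ k) (hR : 2 ^ R ≤ k) :
    ∑ r ∈ range (R + 1), ((2 : ℝ) ^ (c + 1 - γ)) ^ r ≤
      (1 + 2 ^ (c + 1)) * ∑ d ∈ Icc 1 k, (d : ℝ) ^ (c - γ) := by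
  set S := ∑ d ∈ Icc 1 k, (d : ℝ) ^ (c - γ)
  have hS : ∑ r ∈ range R, 2 ^ (-γ) * ((2 : ℝ) ^ (c + 1 - γ)) ^ r ≤ S :=
    calc ∑ r ∈ range R, 2 ^ (-γ) * ((2 : ℝ) ^ (c + 1 - γ)) ^ r
        ≤ ∑ r ∈ range R, ∑ d ∈ Ico (2 ^ r : ℕ) (2 ^ (r + 1)), (d : ℝ) ^ (c - γ) :=
          sum_le_sum fun r _ => two_rpow_neg_mul_pow_le_sum_Ico_two_pow_rpow hc hγ r
      _ = ∑ d ∈ Ico (2 ^ 0 : ℕ) (2 ^ R), (d : ℝ) ^ (c - γ) :=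
          sum_range_sum_Ico_of_monotone _ (pow_right_mono₀ one_le_two) R
      _ ≤ S :=
          sum_le_sum_of_subset_of_nonneg (Ico_subset_Icc_self.trans (Icc_subset_Icc_right hR))
            fun d _ _ => by positivity
  have hS₁ : 1 ≤ S := by
    simpa using single_le_sum (f := fun d : ℕ => (d : ℝ) ^ (c - γ)) (fun d _ => by positivity)
      (mem_Icc.2 ⟨le_rfl, hk⟩)
  calc ∑ r ∈ range (R + 1), ((2 : ℝ) ^ (c + 1 - γ)) ^ r
      = 2 ^ (c + 1) * ∑ r ∈ range R, 2 ^ (-γ) * ((2 : ℝ) ^ (c + 1 - γ)) ^ r + 1 := by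
        rw [geom_sum_succ, ← mul_sum, two_rpow_add_one_sub, Real.rpow_add_one two_ne_zero]
        ring
    _ ≤ 2 ^ (c + 1) * S + S := by gcongr
    _ = (1 + 2 ^ (c + 1)) * S := by ring

theorem IsPLB.sum_Icc_two_pow_rpow_mul_degCount_le {V : Type*} [Fintype V]
    {G : SimpleGraph V} {γ c₀ c : ℝ} (hG : IsPLB G γ c₀) (hc₀ : 0 ≤ c₀) (hc : 0 ≤ c)
    (hγ : 0 ≤ γ) (r : ℕ) :
    ∑ d ∈ Icc (2 ^ r : ℕ) (2 ^ (r + 1)), (d : ℝ) ^ c * (degCount G d : ℝ) ≤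
      c₀ * Fintype.card V * (2 ^ (c + 1) * ((2 : ℝ) ^ (c + 1 - γ)) ^ r) :=
  calc ∑ d ∈ Icc (2 ^ r : ℕ) (2 ^ (r + 1)), (d : ℝ) ^ c * (degCount G d : ℝ)
      ≤ ∑ d ∈ Icc (2 ^ r : ℕ) (2 ^ (r + 1)), ((2 : ℝ) ^ (r + 1)) ^ c * degCount G d := by
        gcongr with d hd
        exact_mod_cast (mem_Icc.1 hd).2
    _ = ((2 : ℝ) ^ (r + 1)) ^ c *
          ∑ d ∈ Icc (2 ^ r : ℕ) (2 ^ (r + 1)), (degCount G d : ℝ) :=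
        (mul_sum ..).symm
    _ ≤ ((2 : ℝ) ^ (r + 1)) ^ c *
          (c₀ * Fintype.card V * (2 * 2 ^ r * ((2 : ℝ) ^ r) ^ (-γ))) := by
        grw [hG r, sum_Icc_two_pow_rpow_neg_le hγ r]
    _ = c₀ * Fintype.card V * (2 ^ (c + 1) * ((2 : ℝ) ^ (c + 1 - γ)) ^ r) := by
        rw [two_rpow_add_one_sub, Real.rpow_add_one two_ne_zero,
          ← Real.rpow_pow_comm zero_le_two, ← Real.rpow_pow_comm zero_le_two]
        ring

/-- Lemma on PLB graphs: for every `c > 0` there is a constant `C` (depending only on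
`c₀, γ, c`) with `Σ_{d=1}^k d^c n(d) ≤ C n Σ_{d=1}^k d^(c-γ)` for all `k ≥ 1`. -/
theorem plb_moment_bound (γ c₀ c : ℝ) (hγ : 1 < γ) (hc₀ : 0 < c₀) (hc : 0 < c) :
    ∃ C : ℝ, 0 < C ∧
      ∀ (V : Type) [Fintype V] (G : SimpleGraph V), IsPLB G γ c₀ →
        ∀ k : ℕ, 1 ≤ k →
          (∑ d ∈ Finset.Icc 1 k, (d : ℝ) ^ c * (degCount G d : ℝ)) ≤
            C * (Fintype.card V : ℝ) * ∑ d ∈ Finset.Icc 1 k, (d : ℝ) ^ (c - γ) := by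
  refine ⟨c₀ * 2 ^ (c + 1) * (1 + 2 ^ (c + 1)), by positivity, fun V _ G hG k hk => ?_⟩
  have hγ₀ : 0 ≤ γ := by linarith
  set R := Nat.log 2 k
  calc ∑ d ∈ Icc 1 k, (d : ℝ) ^ c * (degCount G d : ℝ)
      ≤ ∑ r ∈ range (R + 1),
          ∑ d ∈ Icc (2 ^ r : ℕ) (2 ^ (r + 1)), (d : ℝ) ^ c * (degCount G d : ℝ) :=
        sum_Icc_one_le_sum_range_sum_Icc_two_pow (fun d => by positivity)
          (Nat.lt_pow_succ_log_self one_lt_two k)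
    _ ≤ ∑ r ∈ range (R + 1),
          c₀ * Fintype.card V * (2 ^ (c + 1) * ((2 : ℝ) ^ (c + 1 - γ)) ^ r) :=
        sum_le_sum fun r _ => IsPLB.sum_Icc_two_pow_rpow_mul_degCount_le hG hc₀.le hc.le hγ₀ r
    _ = c₀ * Fintype.card V * 2 ^ (c + 1) *
          ∑ r ∈ range (R + 1), ((2 : ℝ) ^ (c + 1 - γ)) ^ r := by
        simp only [mul_sum, mul_assoc]
    _ ≤ c₀ * Fintype.card V * 2 ^ (c + 1) *
          ((1 + 2 ^ (c + 1)) * ∑ d ∈ Icc 1 k, (d : ℝ) ^ (c - γ)) := by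
        gcongr
        exact sum_range_succ_two_rpow_pow_le hc.le hγ₀ hk (Nat.pow_log_le_self 2 (by omega))
    _ = c₀ * 2 ^ (c + 1) * (1 + 2 ^ (c + 1)) * Fintype.card V *
          ∑ d ∈ Icc 1 k, (d : ℝ) ^ (c - γ) := by ring
end

section
/- Let G be a PLB graph on n ≥ 2 vertices with constant c₀, and let W = Σ_v C(deg(v), 2) denote the number of wedges of G. If the PLB exponent is γ = 3, then W ≤ C · n · log n for a constant C depending only on c₀; if the PLB exponent is γ > 3, then W ≤ C · n for a constant C depending only on c₀ and γ. -/
/-! Sort the vertices by dyadic degree blocks `[2^r, 2^(r+1)]`, `r ≤ log₂ n`. A vertex in block `r`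
lies in at most `4^(r+1)` wedges, and the PLB condition allows at most `2 c₀ n 2^(r(1-γ))`
such vertices, so block `r` contributes at most `8 c₀ n 2^(r(3-γ))`. For `γ = 3` the
`O(log n)` blocks contribute `O(n)` each; for `γ > 3` the contributions form a convergent
geometric series. -/

open Finset

lemma sum_Icc_le_sum_dyadic {t : ℕ → ℝ} (ht : ∀ d, 0 ≤ t d) (N : ℕ) :
    ∑ d ∈ Icc 1 N, t d ≤
      ∑ r ∈ range (Nat.log 2 N + 1), ∑ d ∈ Icc (2 ^ r) (2 ^ (r + 1)), t d := by
  have hlog : ∀ d ∈ Icc 1 N, Nat.log 2 d ∈ range (Nat.log 2 N + 1) := fun d hd =>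
    mem_range_succ_iff.2 (Nat.log_mono_right (mem_Icc.1 hd).2)
  rw [← sum_fiberwise_of_maps_to hlog]
  refine sum_le_sum fun r _ => sum_le_sum_of_subset_of_nonneg ?_ fun d _ _ => ht d
  intro d hd
  obtain ⟨hdN, rfl⟩ := mem_filter.1 hd
  have hd0 : d ≠ 0 := Nat.one_le_iff_ne_zero.1 (mem_Icc.1 hdN).1
  exact mem_Icc.2 ⟨Nat.pow_log_le_self 2 hd0, (Nat.lt_pow_succ_log_self one_lt_two d).le⟩

lemma two_mul_two_rpow_neg (γ : ℝ) : 2 * (2 : ℝ) ^ (-γ) = 2 ^ (1 - γ) := by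
  rw [sub_eq_add_neg, Real.rpow_add two_pos, Real.rpow_one]

lemma sum_rpow_neg_Icc_two_pow_le {γ : ℝ} (hγ : 0 ≤ γ) (r : ℕ) :
    ∑ d ∈ Icc (2 ^ r : ℕ) (2 ^ (r + 1)), (d : ℝ) ^ (-γ) ≤ 2 * ((2 : ℝ) ^ (1 - γ)) ^ r := by
  have hterm : ∀ d ∈ Icc (2 ^ r : ℕ) (2 ^ (r + 1)), (d : ℝ) ^ (-γ) ≤ ((2 : ℝ) ^ (-γ)) ^ r := by
    intro d hd
    rw [Real.rpow_pow_comm zero_le_two]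
    exact Real.rpow_le_rpow_of_nonpos (by positivity)
      (by exact_mod_cast (mem_Icc.1 hd).1) (neg_nonpos.2 hγ)
  have hcard : (#(Icc (2 ^ r : ℕ) (2 ^ (r + 1))) : ℝ) ≤ 2 * 2 ^ r := by
    rw [Nat.card_Icc]
    have := Nat.one_le_two_pow (n := r)
    exact_mod_cast (show 2 ^ (r + 1) + 1 - 2 ^ r ≤ 2 * 2 ^ r by rw [pow_succ]; omega)
  calc ∑ d ∈ Icc (2 ^ r : ℕ) (2 ^ (r + 1)), (d : ℝ) ^ (-γ)
      ≤ #(Icc (2 ^ r : ℕ) (2 ^ (r + 1))) * ((2 : ℝ) ^ (-γ)) ^ r := by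
        simpa using sum_le_card_nsmul _ _ _ hterm
    _ ≤ 2 * 2 ^ r * ((2 : ℝ) ^ (-γ)) ^ r := by gcongr
    _ = 2 * ((2 : ℝ) ^ (1 - γ)) ^ r := by
        rw [← two_mul_two_rpow_neg, mul_pow, mul_assoc]

namespace SimpleGraph

variable {V : Type*} [Fintype V] (G : SimpleGraph V)

lemma sum_comp_degree_eq_sum_degCount (f : ℕ → ℝ) :
    ∑ v, f {u | G.Adj v u}.ncard =
      ∑ d ∈ range (Fintype.card V + 1), degCount G d * f d := by
  have hdeg : ∀ v ∈ (univ : Finset V), {u | G.Adj v u}.ncard ∈ range (Fintype.card V + 1) :=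
    fun v _ => mem_range_succ_iff.2 ((Set.ncard_le_card _).trans_eq Nat.card_eq_fintype_card)
  rw [← sum_fiberwise_of_maps_to hdeg]
  refine sum_congr rfl fun d _ => ?_
  rw [sum_congr rfl fun v hv => congrArg f (mem_filter.1 hv).2, sum_const, nsmul_eq_mul,
    degCount, Set.ncard_eq_toFinset_card', Set.toFinset_ofPred]

end SimpleGraph

lemma Nat.log_two_add_one_le_mul_log {n : ℕ} (hn : 2 ≤ n) :
    (Nat.log 2 n + 1 : ℝ) ≤ 2 / Real.log 2 * Real.log n := by
  have hR : (1 : ℝ) ≤ Nat.log 2 n := by exact_mod_cast Nat.log_pos one_lt_two hn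
  have hlogb : (Nat.log 2 n : ℝ) ≤ Real.logb 2 n := by exact_mod_cast Real.natLog_le_logb n 2
  rw [Real.logb] at hlogb
  linarith [show 2 / Real.log 2 * Real.log n = 2 * (Real.log n / Real.log 2) by ring]

namespace IsPLB

variable {V : Type*} [Fintype V] {G : SimpleGraph V} {γ c₀ : ℝ}

lemma sum_degCount_mul_choose_two_Icc_le (h : IsPLB G γ c₀) (hγ : 0 ≤ γ) (hc₀ : 0 ≤ c₀)
    (r : ℕ) :
    ∑ d ∈ Icc (2 ^ r : ℕ) (2 ^ (r + 1)), (degCount G d : ℝ) * (d.choose 2 : ℕ) ≤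
      8 * c₀ * Fintype.card V * ((2 : ℝ) ^ (3 - γ)) ^ r := by
  have hchoose : ∀ d ∈ Icc (2 ^ r : ℕ) (2 ^ (r + 1)), ((d.choose 2 : ℕ) : ℝ) ≤ 4 ^ (r + 1) := by
    intro d hd
    have : d.choose 2 ≤ 4 ^ (r + 1) := calc
      d.choose 2 ≤ d ^ 2 := Nat.choose_le_pow d 2
      _ ≤ (2 ^ (r + 1)) ^ 2 := Nat.pow_le_pow_left (mem_Icc.1 hd).2 2
      _ = 4 ^ (r + 1) := by rw [← pow_mul, mul_comm, pow_mul]; norm_num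
    exact_mod_cast this
  calc ∑ d ∈ Icc (2 ^ r : ℕ) (2 ^ (r + 1)), (degCount G d : ℝ) * (d.choose 2 : ℕ)
      ≤ (∑ d ∈ Icc (2 ^ r : ℕ) (2 ^ (r + 1)), (degCount G d : ℝ)) * 4 ^ (r + 1) := by
        rw [sum_mul]
        exact sum_le_sum fun d hd => mul_le_mul_of_nonneg_left (hchoose d hd) (by positivity)
    _ ≤ c₀ * Fintype.card V * (2 * ((2 : ℝ) ^ (1 - γ)) ^ r) * 4 ^ (r + 1) := by
        gcongr
        exact (h r).trans (by gcongr; exact sum_rpow_neg_Icc_two_pow_le hγ r)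
    _ = 8 * c₀ * Fintype.card V * ((2 : ℝ) ^ (3 - γ)) ^ r := by
        rw [show (3 : ℝ) - γ = (1 - γ) + 2 by ring, Real.rpow_add two_pos, Real.rpow_two,
          mul_pow, pow_succ]
        ring

lemma sum_choose_two_degree_le (h : IsPLB G γ c₀) (hγ : 0 ≤ γ) (hc₀ : 0 ≤ c₀) :
    ∑ v, (({u | G.Adj v u}.ncard.choose 2 : ℕ) : ℝ) ≤
      8 * c₀ * Fintype.card V *
        ∑ r ∈ range (Nat.log 2 (Fintype.card V) + 1), ((2 : ℝ) ^ (3 - γ)) ^ r := by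
  set n := Fintype.card V
  set t : ℕ → ℝ := fun d => degCount G d * (d.choose 2 : ℕ)
  calc ∑ v, (({u | G.Adj v u}.ncard.choose 2 : ℕ) : ℝ)
      = ∑ d ∈ range (n + 1), t d := G.sum_comp_degree_eq_sum_degCount fun d => (d.choose 2 : ℕ)
    _ = ∑ d ∈ Icc 1 n, t d := by
        rw [range_eq_Ico, sum_eq_sum_Ico_succ_bot n.succ_pos]
        simp [t, Ico_add_one_right_eq_Icc]
    _ ≤ ∑ r ∈ range (Nat.log 2 n + 1), ∑ d ∈ Icc (2 ^ r) (2 ^ (r + 1)), t d :=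
        sum_Icc_le_sum_dyadic (fun d => by positivity) n
    _ ≤ ∑ r ∈ range (Nat.log 2 n + 1), 8 * c₀ * n * ((2 : ℝ) ^ (3 - γ)) ^ r :=
        sum_le_sum fun r _ => h.sum_degCount_mul_choose_two_Icc_le hγ hc₀ r
    _ = 8 * c₀ * n * ∑ r ∈ range (Nat.log 2 n + 1), ((2 : ℝ) ^ (3 - γ)) ^ r :=
        (mul_sum ..).symm

end IsPLB

/-- Wedge counts of PLB graphs: if the exponent is `γ = 3` then the number of wedges
is `O(n log n)`; if `γ > 3` it is `O(n)` (constants depending only on `c₀` and `γ`). -/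
theorem plb_wedge_bound (c₀ : ℝ) (hc₀ : 0 < c₀) :
    (∃ C : ℝ, 0 < C ∧
      ∀ (V : Type) [Fintype V] (G : SimpleGraph V), 2 ≤ Fintype.card V →
        IsPLB G 3 c₀ →
          (∑ v : V, ((({u | G.Adj v u}.ncard).choose 2 : ℕ) : ℝ)) ≤
            C * (Fintype.card V : ℝ) * Real.log (Fintype.card V)) ∧
    (∀ γ : ℝ, 3 < γ →
      ∃ C : ℝ, 0 < C ∧
        ∀ (V : Type) [Fintype V] (G : SimpleGraph V), 2 ≤ Fintype.card V →
          IsPLB G γ c₀ →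
            (∑ v : V, ((({u | G.Adj v u}.ncard).choose 2 : ℕ) : ℝ)) ≤
              C * (Fintype.card V : ℝ)) := by
  have hlog2 := Real.log_pos one_lt_two
  refine ⟨⟨16 * c₀ / Real.log 2, by positivity, fun V _ G hn h => ?_⟩, fun γ hγ => ?_⟩
  · set n := Fintype.card V
    calc ∑ v, (({u | G.Adj v u}.ncard.choose 2 : ℕ) : ℝ)
        ≤ 8 * c₀ * n * ∑ r ∈ range (Nat.log 2 n + 1), ((2 : ℝ) ^ ((3 : ℝ) - 3)) ^ r :=
          h.sum_choose_two_degree_le (by norm_num) hc₀.le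
      _ = 8 * c₀ * n * (Nat.log 2 n + 1) := by simp
      _ ≤ 8 * c₀ * n * (2 / Real.log 2 * Real.log n) := by
          gcongr; exact Nat.log_two_add_one_le_mul_log hn
      _ = 16 * c₀ / Real.log 2 * n * Real.log n := by ring
  · set y := (2 : ℝ) ^ (3 - γ)
    have hy0 : 0 < y := by positivity
    have hy1 : y < 1 := Real.rpow_lt_one_of_one_lt_of_neg one_lt_two (by linarith)
    refine ⟨8 * c₀ / (1 - y), div_pos (by positivity) (sub_pos.2 hy1), fun V _ G _ h => ?_⟩
    set n := Fintype.card V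
    calc ∑ v, (({u | G.Adj v u}.ncard.choose 2 : ℕ) : ℝ)
        ≤ 8 * c₀ * n * ∑ r ∈ range (Nat.log 2 n + 1), y ^ r :=
          h.sum_choose_two_degree_le (by linarith) hc₀.le
      _ ≤ 8 * c₀ * n * (1 - y)⁻¹ := by
          gcongr
          simpa [← range_eq_Ico] using geom_sum_Ico_le_of_lt_one hy0.le hy1 (m := 0)
      _ = 8 * c₀ / (1 - y) * n := by ring
end
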